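/- arXiv:1604.06375 — 14 statements merged into one kernel-verified Lean document; each statement's English description precedes it below -/
import Mathlib

section
/- In the pointwise setting of a spacelike codimension-2 immersion, the immersion is pseudo-umbilical (i.e. Ã_H = 0) if and only if 𝓑 − 𝓙 = A_H, where A_H is the shape operator associated to the mean curvature vector H. -/
open scoped RealInnerProductSpace

theorem stmt2
    {n : ℕ} (hn : 1 ≤ n)
    {V : Type*} [NormedAddCommGroup V] [InnerProductSpace ℝ V] [FiniteDimensional ℝ V]
    (hV : Module.finrank ℝ V = n)
    {W : Type*} [AddCommGroup W] [Module ℝ W] [FiniteDimensional ℝ W]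
    (hW : Module.finrank ℝ W = 2)
    (gbar : W →ₗ[ℝ] W →ₗ[ℝ] ℝ)
    (hgsymm : ∀ ξ η : W, gbar ξ η = gbar η ξ)
    (hgnd : ∀ ξ : W, (∀ η : W, gbar ξ η = 0) → ξ = 0)
    (h : V →ₗ[ℝ] V →ₗ[ℝ] W) (hsymm : ∀ X Y : V, h X Y = h Y X)
    (A : W →ₗ[ℝ] V →ₗ[ℝ] V)
    (hAsa : ∀ (ξ : W) (X Y : V), ⟪A ξ X, Y⟫ = ⟪X, A ξ Y⟫)
    (hAh : ∀ (ξ : W) (X Y : V), ⟪A ξ X, Y⟫ = gbar (h X Y) ξ)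
    (H : W) (hH : ∀ ξ : W, gbar H ξ = (LinearMap.trace ℝ V (A ξ)) / (n : ℝ))
    (At : W → (V →ₗ[ℝ] V))
    (hAt : ∀ ξ : W, At ξ = A ξ - ((LinearMap.trace ℝ V (A ξ)) / (n : ℝ)) • (LinearMap.id : V →ₗ[ℝ] V))
    (ξ₁ ξ₂ : W) (ε₁ ε₂ : ℝ)
    (hε₁ : ε₁ = 1 ∨ ε₁ = -1) (hε₂ : ε₂ = 1 ∨ ε₂ = -1)
    (hon₁ : gbar ξ₁ ξ₁ = ε₁) (hon₂ : gbar ξ₂ ξ₂ = ε₂) (hon₁₂ : gbar ξ₁ ξ₂ = 0)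
    :
    At H = 0 ↔ (ε₁ • (A ξ₁ ∘ₗ A ξ₁) + ε₂ • (A ξ₂ ∘ₗ A ξ₂)) - (ε₁ • (At ξ₁ ∘ₗ At ξ₁) + ε₂ • (At ξ₂ ∘ₗ At ξ₂)) = A H := by
  have hε₁sq : ε₁ * ε₁ = 1 := by rcases hε₁ with h'|h' <;> rw [h'] <;> norm_num
  have hε₂sq : ε₂ * ε₂ = 1 := by rcases hε₂ with h'|h' <;> rw [h'] <;> norm_num
  have hε₁ne : ε₁ ≠ 0 := by rcases hε₁ with h'|h' <;> rw [h'] <;> norm_num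
  have hε₂ne : ε₂ ≠ 0 := by rcases hε₂ with h'|h' <;> rw [h'] <;> norm_num
  have hon₂₁ : gbar ξ₂ ξ₁ = 0 := by rw [hgsymm]; exact hon₁₂
  set μ₁ : ℝ := gbar H ξ₁ with hμ₁
  set μ₂ : ℝ := gbar H ξ₂ with hμ₂
  -- linear independence of ξ₁, ξ₂
  have hli : LinearIndependent ℝ ![ξ₁, ξ₂] := by
    rw [LinearIndependent.pair_iff]
    intro s t hst
    have h1 : gbar (s • ξ₁ + t • ξ₂) ξ₁ = 0 := by rw [hst]; simp
    have h2 : gbar (s • ξ₁ + t • ξ₂) ξ₂ = 0 := by rw [hst]; simp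
    simp only [map_add, map_smul, LinearMap.add_apply, LinearMap.smul_apply, smul_eq_mul,
      hon₁, hon₂, hon₁₂, hon₂₁, mul_zero, add_zero, zero_add] at h1 h2
    constructor
    · rcases mul_eq_zero.1 h1 with h' | h'
      · exact h'
      · exact absurd h' hε₁ne
    · rcases mul_eq_zero.1 h2 with h' | h'
      · exact h'
      · exact absurd h' hε₂ne
  have hspan : Submodule.span ℝ (Set.range ![ξ₁, ξ₂]) = ⊤ :=
    hli.span_eq_top_of_card_eq_finrank (by simp [hW])
  have hrange : Set.range ![ξ₁, ξ₂] = {ξ₁, ξ₂} := by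
    ext x; simp [Fin.exists_fin_two, or_comm]
  rw [hrange] at hspan
  -- decomposition of H
  have hHdec : H = (ε₁ * μ₁) • ξ₁ + (ε₂ * μ₂) • ξ₂ := by
    have key : ∀ η : W, gbar (H - ((ε₁ * μ₁) • ξ₁ + (ε₂ * μ₂) • ξ₂)) η = 0 := by
      have : (gbar (H - ((ε₁ * μ₁) • ξ₁ + (ε₂ * μ₂) • ξ₂)) : W →ₗ[ℝ] ℝ) = 0 := by
        apply LinearMap.ext_on hspan
        intro x hx
        rcases hx with hx | hx <;> subst hx
        · simp only [map_sub, map_add, map_smul, LinearMap.sub_apply, LinearMap.add_apply,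
            LinearMap.smul_apply, smul_eq_mul, hon₁, hon₂₁, LinearMap.zero_apply, ← hμ₁]
          linear_combination (-μ₁) * hε₁sq
        · simp only [map_sub, map_add, map_smul, LinearMap.sub_apply, LinearMap.add_apply,
            LinearMap.smul_apply, smul_eq_mul, hon₂, hon₁₂, LinearMap.zero_apply, ← hμ₂]
          linear_combination (-μ₂) * hε₂sq
      intro η; rw [this]; rfl
    have := hgnd _ key
    rw [sub_eq_zero] at this
    exact this
  -- trace identities
  have htr₁ : (LinearMap.trace ℝ V (A ξ₁)) / (n : ℝ) = μ₁ := (hH ξ₁).symm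
  have htr₂ : (LinearMap.trace ℝ V (A ξ₂)) / (n : ℝ) = μ₂ := (hH ξ₂).symm
  set c : ℝ := ε₁ * μ₁ * μ₁ + ε₂ * μ₂ * μ₂ with hc
  have htrH : (LinearMap.trace ℝ V (A H)) / (n : ℝ) = c := by
    rw [← hH H]
    conv_lhs => rw [hHdec]
    simp only [map_add, map_smul, LinearMap.add_apply, LinearMap.smul_apply, smul_eq_mul]
    rw [hon₁, hon₂, hon₁₂, hon₂₁, hc]
    linear_combination (ε₁ * μ₁ * μ₁) * hε₁sq + (ε₂ * μ₂ * μ₂) * hε₂sq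
  have hAH : A H = (ε₁ * μ₁) • A ξ₁ + (ε₂ * μ₂) • A ξ₂ := by
    conv_lhs => rw [hHdec]
    simp
  have hAtH : At H = A H - c • (LinearMap.id : V →ₗ[ℝ] V) := by
    rw [hAt H, htrH]
  -- compute B - J
  have hBJ : (ε₁ • (A ξ₁ ∘ₗ A ξ₁) + ε₂ • (A ξ₂ ∘ₗ A ξ₂)) -
      (ε₁ • (At ξ₁ ∘ₗ At ξ₁) + ε₂ • (At ξ₂ ∘ₗ At ξ₂))
      = (2 * (ε₁ * μ₁)) • A ξ₁ + (2 * (ε₂ * μ₂)) • A ξ₂ - c • (LinearMap.id : V →ₗ[ℝ] V) := by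
    rw [hAt ξ₁, hAt ξ₂, htr₁, htr₂]
    ext X
    simp only [LinearMap.sub_apply, LinearMap.add_apply, LinearMap.smul_apply,
      LinearMap.comp_apply, LinearMap.sub_apply, LinearMap.smul_apply, LinearMap.id_apply,
      map_sub, map_smul, hc]
    module
  rw [hAt ξ₁, hAt ξ₂, htr₁, htr₂] at *
  constructor
  · intro h0
    rw [hAtH, sub_eq_zero, hAH] at h0
    rw [hBJ, hAH, ← h0]
    module
  · intro h0
    rw [hBJ, hAH] at h0
    have hT : (ε₁ * μ₁) • A ξ₁ + (ε₂ * μ₂) • A ξ₂ = c • (LinearMap.id : V →ₗ[ℝ] V) := by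
      linear_combination (norm := module) h0
    rw [hAtH, hAH, hT, sub_self]
end

section
/- In the pointwise setting of a spacelike codimension-2 immersion, the immersion is pseudo-umbilical (i.e. Ã_H = 0) if and only if 𝓑 − 𝓙 is a scalar multiple of the identity operator on V. -/
/-!
Write `t_ξ = ḡ(H, ξ) = tr A_ξ / n`, so that `A_ξ = Ã_ξ + t_ξ id` and
`A_ξ² - Ã_ξ² = 2 t_ξ Ã_ξ + t_ξ² id`. Summing with the signs `εᵢ` and using the orthonormal expansion
`H = Σ εᵢ t_{ξᵢ} ξᵢ`, the traceless part of `𝓑 - 𝓙` is `2 Ã_H`, and an operator is scalar exactly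
when its traceless part vanishes.
-/

open Module

namespace LinearMap

section shear

variable {K V : Type*} [Field K] [AddCommGroup V] [Module K V]

/-- The traceless part of `f`, the shear operator `Ã` of the paper. If `finrank K V = 0` the
division is junk, but then `V` is trivial. -/
noncomputable def shear : Module.End K V →ₗ[K] Module.End K V where
  toFun f := f - (trace K V f / finrank K V) • id
  map_add' f g := by simp only [map_add, add_div, add_smul]; abel
  map_smul' c f := by
    simp only [map_smul, smul_eq_mul, mul_div_assoc, mul_smul, RingHom.id_apply, smul_sub]

theorem shear_apply (f : Module.End K V) : shear f = f - (trace K V f / finrank K V) • id := rfl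

theorem comp_self_eq_shear_comp_shear_add (f : Module.End K V) :
    f ∘ₗ f = shear f ∘ₗ shear f +
      (2 * (trace K V f / finrank K V)) • shear f + (trace K V f / finrank K V) ^ 2 • id := by
  ext x
  simp only [shear_apply, sub_apply, add_apply, smul_apply, comp_apply, id_apply, map_sub, map_smul]
  module

variable [CharZero K] [FiniteDimensional K V]

theorem trace_shear (f : Module.End K V) : trace K V (shear f) = 0 := by
  have : (finrank K V : K) = 0 → trace K V f = 0 := by
    intro h
    have : Subsingleton V := Module.finrank_zero_iff.mp (by exact_mod_cast h)
    rw [Subsingleton.elim f 0, map_zero]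
  rw [shear_apply, map_sub, map_smul, trace_id, smul_eq_mul, div_mul_cancel_of_imp this, sub_self]

theorem shear_id : shear (id : Module.End K V) = 0 := by
  rcases eq_or_ne (finrank K V) 0 with h | h
  · have : Subsingleton V := Module.finrank_zero_iff.mp h
    exact Subsingleton.elim _ _
  · rw [shear_apply, trace_id, div_self (by exact_mod_cast h), one_smul, sub_self]

theorem shear_eq_zero_iff {f : Module.End K V} : shear f = 0 ↔ ∃ c : K, f = c • id :=
  ⟨fun h => ⟨_, sub_eq_zero.mp h⟩, fun ⟨c, hc⟩ => by rw [hc, map_smul, shear_id, smul_zero]⟩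

theorem shear_shear (f : Module.End K V) : shear (shear f) = shear f := by
  rw [shear_apply (shear f), trace_shear, zero_div, zero_smul, sub_zero]

theorem shear_comp_self (f : Module.End K V) :
    shear (f ∘ₗ f) = shear (shear f ∘ₗ shear f) + (2 * (trace K V f / finrank K V)) • shear f := by
  rw [comp_self_eq_shear_comp_shear_add f, map_add, map_add, map_smul, map_smul, shear_shear,
    shear_id, smul_zero, add_zero]

end shear

theorem BilinForm.eq_sum_div_of_iIsOrtho {K W ι : Type*} [Field K] [AddCommGroup W] [Module K W]
    [FiniteDimensional K W] [Fintype ι] {B : LinearMap.BilinForm K W} (hB : B.SeparatingLeft)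
    {v : ι → W} (hv : B.iIsOrtho v) (hvv : ∀ i, B (v i) (v i) ≠ 0)
    (hcard : Fintype.card ι = finrank K W) (x : W) :
    x = ∑ i, (B x (v i) / B (v i) (v i)) • v i := by
  classical
  have hspan :=
    (BilinForm.linearIndependent_of_iIsOrtho hv hvv).span_eq_top_of_card_eq_finrank' hcard
  rw [← sub_eq_zero]
  refine hB _ fun y => ?_
  suffices B (x - ∑ i, (B x (v i) / B (v i) (v i)) • v i) = 0 by rw [this]; rfl
  refine ext_on_range hspan fun j => ?_
  have hcoef : ∀ i,
      (B x (v i) / B (v i) (v i)) * B (v i) (v j) = if i = j then B x (v j) else 0 := by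
    intro i
    split_ifs with hij
    · subst hij; exact div_mul_cancel₀ _ (hvv i)
    · rw [hv hij, mul_zero]
  simp [map_sum, hcoef]

theorem BilinForm.eq_add_of_finrank_eq_two {K W : Type*} [Field K] [AddCommGroup W]
    [Module K W] [FiniteDimensional K W] {B : LinearMap.BilinForm K W} (hB : B.SeparatingLeft)
    {ξ₁ ξ₂ : W} (h₁₂ : B ξ₁ ξ₂ = 0) (h₂₁ : B ξ₂ ξ₁ = 0) (h₁ : B ξ₁ ξ₁ ≠ 0) (h₂ : B ξ₂ ξ₂ ≠ 0)
    (hW : finrank K W = 2) (x : W) :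
    x = (B x ξ₁ / B ξ₁ ξ₁) • ξ₁ + (B x ξ₂ / B ξ₂ ξ₂) • ξ₂ := by
  have hortho : B.iIsOrtho ![ξ₁, ξ₂] := by
    intro i j hij
    fin_cases i <;> fin_cases j <;> simp_all [Function.onFun]
  have hself : ∀ i, B (![ξ₁, ξ₂] i) (![ξ₁, ξ₂] i) ≠ 0 := by
    intro i
    fin_cases i <;> simpa
  simpa [Fin.sum_univ_two] using eq_sum_div_of_iIsOrtho hB hortho hself (by simp [hW]) x

end LinearMap

open LinearMap

open scoped RealInnerProductSpace

theorem stmt3_general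
    {n : ℕ}
    {V : Type*} [NormedAddCommGroup V] [InnerProductSpace ℝ V] [FiniteDimensional ℝ V]
    (hV : Module.finrank ℝ V = n)
    {W : Type*} [AddCommGroup W] [Module ℝ W] [FiniteDimensional ℝ W]
    (hW : Module.finrank ℝ W = 2)
    (gbar : W →ₗ[ℝ] W →ₗ[ℝ] ℝ)
    (hgsymm : ∀ ξ η : W, gbar ξ η = gbar η ξ)
    (hgnd : ∀ ξ : W, (∀ η : W, gbar ξ η = 0) → ξ = 0)
    (A : W →ₗ[ℝ] V →ₗ[ℝ] V)
    (H : W) (hH : ∀ ξ : W, gbar H ξ = (LinearMap.trace ℝ V (A ξ)) / (n : ℝ))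
    (At : W → (V →ₗ[ℝ] V))
    (hAt : ∀ ξ : W, At ξ = A ξ - ((LinearMap.trace ℝ V (A ξ)) / (n : ℝ)) • (LinearMap.id : V →ₗ[ℝ] V))
    (ξ₁ ξ₂ : W) (ε₁ ε₂ : ℝ)
    (hε₁ : ε₁ = 1 ∨ ε₁ = -1) (hε₂ : ε₂ = 1 ∨ ε₂ = -1)
    (hon₁ : gbar ξ₁ ξ₁ = ε₁) (hon₂ : gbar ξ₂ ξ₂ = ε₂) (hon₁₂ : gbar ξ₁ ξ₂ = 0)
    :
    At H = 0 ↔ ∃ c : ℝ, (ε₁ • (A ξ₁ ∘ₗ A ξ₁) + ε₂ • (A ξ₂ ∘ₗ A ξ₂)) - (ε₁ • (At ξ₁ ∘ₗ At ξ₁) + ε₂ • (At ξ₂ ∘ₗ At ξ₂)) = c • (LinearMap.id : V →ₗ[ℝ] V) := by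
  subst hV
  obtain rfl : At = fun ξ => shear (A ξ) := funext hAt
  have hε₁' : ε₁ ≠ 0 ∧ ε₁⁻¹ = ε₁ := by rcases hε₁ with rfl | rfl <;> norm_num
  have hε₂' : ε₂ ≠ 0 ∧ ε₂⁻¹ = ε₂ := by rcases hε₂ with rfl | rfl <;> norm_num
  have hexp : H = (gbar H ξ₁ * ε₁) • ξ₁ + (gbar H ξ₂ * ε₂) • ξ₂ := by
    simpa only [hon₁, hon₂, div_eq_mul_inv, hε₁'.2, hε₂'.2] using
      BilinForm.eq_add_of_finrank_eq_two hgnd hon₁₂ (hgsymm ξ₂ ξ₁ ▸ hon₁₂)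
        (hon₁.symm ▸ hε₁'.1) (hon₂.symm ▸ hε₂'.1) hW H
  have hkey : shear ((ε₁ • (A ξ₁ ∘ₗ A ξ₁) + ε₂ • (A ξ₂ ∘ₗ A ξ₂)) -
      (ε₁ • (shear (A ξ₁) ∘ₗ shear (A ξ₁)) + ε₂ • (shear (A ξ₂) ∘ₗ shear (A ξ₂)))) =
      (2 : ℝ) • shear (A H) := by
    simp only [map_sub, map_add, map_smul]
    rw [shear_comp_self (A ξ₁), shear_comp_self (A ξ₂), ← hH, ← hH]
    conv_rhs => rw [hexp]
    simp only [map_add, map_smul]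
    module
  rw [← shear_eq_zero_iff, hkey, smul_eq_zero]
  norm_num

theorem stmt3
    {n : ℕ} (hn : 1 ≤ n)
    {V : Type*} [NormedAddCommGroup V] [InnerProductSpace ℝ V] [FiniteDimensional ℝ V]
    (hV : Module.finrank ℝ V = n)
    {W : Type*} [AddCommGroup W] [Module ℝ W] [FiniteDimensional ℝ W]
    (hW : Module.finrank ℝ W = 2)
    (gbar : W →ₗ[ℝ] W →ₗ[ℝ] ℝ)
    (hgsymm : ∀ ξ η : W, gbar ξ η = gbar η ξ)
    (hgnd : ∀ ξ : W, (∀ η : W, gbar ξ η = 0) → ξ = 0)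
    (h : V →ₗ[ℝ] V →ₗ[ℝ] W) (hsymm : ∀ X Y : V, h X Y = h Y X)
    (A : W →ₗ[ℝ] V →ₗ[ℝ] V)
    (hAsa : ∀ (ξ : W) (X Y : V), ⟪A ξ X, Y⟫ = ⟪X, A ξ Y⟫)
    (hAh : ∀ (ξ : W) (X Y : V), ⟪A ξ X, Y⟫ = gbar (h X Y) ξ)
    (H : W) (hH : ∀ ξ : W, gbar H ξ = (LinearMap.trace ℝ V (A ξ)) / (n : ℝ))
    (At : W → (V →ₗ[ℝ] V))
    (hAt : ∀ ξ : W, At ξ = A ξ - ((LinearMap.trace ℝ V (A ξ)) / (n : ℝ)) • (LinearMap.id : V →ₗ[ℝ] V))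
    (ξ₁ ξ₂ : W) (ε₁ ε₂ : ℝ)
    (hε₁ : ε₁ = 1 ∨ ε₁ = -1) (hε₂ : ε₂ = 1 ∨ ε₂ = -1)
    (hon₁ : gbar ξ₁ ξ₁ = ε₁) (hon₂ : gbar ξ₂ ξ₂ = ε₂) (hon₁₂ : gbar ξ₁ ξ₂ = 0)
    :
    At H = 0 ↔ ∃ c : ℝ, (ε₁ • (A ξ₁ ∘ₗ A ξ₁) + ε₂ • (A ξ₂ ∘ₗ A ξ₂)) - (ε₁ • (At ξ₁ ∘ₗ At ξ₁) + ε₂ • (At ξ₂ ∘ₗ At ξ₂)) = c • (LinearMap.id : V →ₗ[ℝ] V) :=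
  stmt3_general hV hW gbar hgsymm hgnd A H hH At hAt ξ₁ ξ₂ ε₁ ε₂ hε₁ hε₂ hon₁ hon₂ hon₁₂
end

section
/- In the pointwise setting of a spacelike codimension-2 immersion, there exists a nonzero ξ ∈ W with Ã_ξ = 0 if and only if there exist a self-adjoint linear operator Ã₀ : V → V with tr(Ã₀ ∘ Ã₀) = n² and a vector G ∈ W such that h̃(X,Y) = ⟨Ã₀ X, Y⟩ · G for all X, Y ∈ V. -/
/-!
The shear operators and the total shear tensor are linked by
`ḡ(h̃(X, Y), ξ) = ⟪Ã_ξ X, Y⟫`. Hence `Ã_ξ = 0` exactly when `h̃` takes values in the kernel of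
`ḡ(·, ξ)`, which for `ξ ≠ 0` is a line `ℝ G₀` since `ḡ` is nondegenerate and `dim W = 2`.
Writing `h̃ = φ • G₀`, the symmetric form `φ` is represented by a self-adjoint operator, which is
rescaled to `tr (Ã₀ ∘ Ã₀) = n²`. Conversely, if `h̃ = ⟪Ã₀ ·, ·⟫ • G`, any nonzero `ξ` in the
(nontrivial) kernel of `ḡ(G, ·)` has `Ã_ξ = 0`.
-/

open scoped RealInnerProductSpace

open Module

lemma Module.Dual.exists_smul_eq_of_apply_eq_zero {K W : Type*} [Field K] [AddCommGroup W]
    [Module K W] [FiniteDimensional K W] {ψ : Dual K W} (hψ : ψ ≠ 0) (hW : finrank K W = 2) :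
    ∃ (f : Dual K W) (G : W), ∀ w, ψ w = 0 → f w • G = w := by
  have hker : finrank K (LinearMap.ker ψ) = 1 := by
    have := ψ.finrank_ker_add_one_of_ne_zero hψ
    omega
  obtain ⟨⟨G, _⟩, hG, hspan⟩ := (finrank_eq_one_iff' (K := K)).mp hker
  obtain ⟨f, hfG⟩ := Projective.exists_dual_eq_one K (x := G) fun h => hG (Subtype.ext h)
  refine ⟨f, G, fun w hw => ?_⟩
  obtain ⟨c, hc⟩ := hspan ⟨w, hw⟩
  have hcw : c • G = w := congrArg Subtype.val hc
  rw [← hcw, map_smul, hfG, smul_eq_mul, mul_one]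

section InnerProductSpace

variable {V : Type*} [NormedAddCommGroup V] [InnerProductSpace ℝ V] [FiniteDimensional ℝ V]

lemma exists_isSymmetric_inner_eq (φ : V →ₗ[ℝ] V →ₗ[ℝ] ℝ) (hφ : ∀ X Y, φ X Y = φ Y X) :
    ∃ B : V →ₗ[ℝ] V, B.IsSymmetric ∧ ∀ X Y, ⟪B X, Y⟫ = φ X Y := by
  let B : V →ₗ[ℝ] V := (InnerProductSpace.toDual ℝ V).symm.toLinearEquiv.toLinearMap ∘ₗ
    LinearMap.toContinuousLinearMap.toLinearMap ∘ₗ φ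
  have hB : ∀ X Y, ⟪B X, Y⟫ = φ X Y := fun X Y => by
    simp [B, InnerProductSpace.toDual_symm_apply]
  exact ⟨B, fun X Y => by rw [hB, real_inner_comm, hB, hφ], hB⟩

lemma LinearMap.IsSymmetric.trace_comp_self_pos {B : V →ₗ[ℝ] V} (hB : B.IsSymmetric)
    (hB0 : B ≠ 0) : 0 < LinearMap.trace ℝ V (B ∘ₗ B) := by
  set e := stdOrthonormalBasis ℝ V
  have hsum : LinearMap.trace ℝ V (B ∘ₗ B) = ∑ i, ‖B (e i)‖ ^ 2 := by
    rw [LinearMap.trace_eq_sum_inner _ e]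
    refine Fintype.sum_congr _ _ fun i => ?_
    rw [LinearMap.comp_apply, ← hB, real_inner_self_eq_norm_sq]
  obtain ⟨i, hi⟩ : ∃ i, B (e i) ≠ 0 := by
    by_contra! h
    exact hB0 (e.toBasis.ext fun i => by simpa using h i)
  rw [hsum]
  exact Finset.sum_pos' (fun i _ => by positivity) ⟨i, Finset.mem_univ i, by positivity⟩

lemma exists_isSymmetric_trace_comp_self_eq_sq {W : Type*} [AddCommGroup W] [Module ℝ W]
    {n : ℕ} (hV : finrank ℝ V = n) {B : V →ₗ[ℝ] V} (hB : B.IsSymmetric) (G₀ : W) :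
    ∃ (A₀ : V →ₗ[ℝ] V) (G : W), A₀.IsSymmetric ∧
      LinearMap.trace ℝ V (A₀ ∘ₗ A₀) = (n : ℝ) ^ 2 ∧ ∀ X Y, ⟪B X, Y⟫ • G₀ = ⟪A₀ X, Y⟫ • G := by
  by_cases hB0 : B = 0
  · refine ⟨√(n : ℝ) • LinearMap.id, 0, LinearMap.IsSymmetric.id.smul (by simp), ?_,
      by simp [hB0]⟩
    rw [LinearMap.smul_comp, LinearMap.comp_smul, smul_smul, LinearMap.id_comp, map_smul,
      LinearMap.trace_id, hV, Real.mul_self_sqrt n.cast_nonneg, smul_eq_mul, sq]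
  have hpos := hB.trace_comp_self_pos hB0
  have hn : (n : ℝ) ≠ 0 := by
    rintro hn
    have : Subsingleton V := finrank_zero_iff.mp (by exact_mod_cast hV.trans (by exact_mod_cast hn))
    exact hB0 (Subsingleton.elim _ _)
  set s := √(LinearMap.trace ℝ V (B ∘ₗ B))
  have hs : s ^ 2 = LinearMap.trace ℝ V (B ∘ₗ B) := Real.sq_sqrt hpos.le
  have hs0 : s ≠ 0 := (Real.sqrt_pos.mpr hpos).ne'
  refine ⟨(n / s : ℝ) • B, (s / n : ℝ) • G₀, hB.smul (by simp), ?_, fun X Y => ?_⟩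
  · rw [LinearMap.smul_comp, LinearMap.comp_smul, smul_smul, map_smul, ← hs, smul_eq_mul]
    field_simp
  · rw [LinearMap.smul_apply, real_inner_smul_left, smul_smul]
    congr 1
    field_simp

end InnerProductSpace

section Shear

variable {V W : Type*} [NormedAddCommGroup V] [InnerProductSpace ℝ V] [AddCommGroup W]
  [Module ℝ W]

noncomputable def totalShear (h : V →ₗ[ℝ] V →ₗ[ℝ] W) (H : W) : V →ₗ[ℝ] V →ₗ[ℝ] W :=
  h - (innerₗ V).compr₂ (LinearMap.toSpanSingleton ℝ W H)

lemma totalShear_apply (h : V →ₗ[ℝ] V →ₗ[ℝ] W) (H : W) (X Y : V) :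
    totalShear h H X Y = h X Y - ⟪X, Y⟫ • H := rfl

lemma totalShear_comm {h : V →ₗ[ℝ] V →ₗ[ℝ] W} (hsymm : ∀ X Y, h X Y = h Y X) (H : W)
    (X Y : V) : totalShear h H X Y = totalShear h H Y X := by
  rw [totalShear_apply, totalShear_apply, hsymm, real_inner_comm]

variable {gbar : W →ₗ[ℝ] W →ₗ[ℝ] ℝ} {h : V →ₗ[ℝ] V →ₗ[ℝ] W} {T : V →ₗ[ℝ] V} {H ξ : W} {c : ℝ}

lemma apply_totalShear_eq_inner (hTh : ∀ X Y, ⟪T X, Y⟫ = gbar (h X Y) ξ) (hH : gbar H ξ = c)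
    (X Y : V) : gbar (totalShear h H X Y) ξ = ⟪(T - c • (LinearMap.id : V →ₗ[ℝ] V)) X, Y⟫ := by
  rw [totalShear_apply, map_sub, map_smul, LinearMap.sub_apply, LinearMap.smul_apply, ← hTh, hH,
    LinearMap.sub_apply, inner_sub_left, LinearMap.smul_apply, LinearMap.id_apply,
    real_inner_smul_left, smul_eq_mul, mul_comm]

lemma sub_smul_id_eq_zero_iff (hTh : ∀ X Y, ⟪T X, Y⟫ = gbar (h X Y) ξ) (hH : gbar H ξ = c) :
    T - c • LinearMap.id = 0 ↔ ∀ X Y, gbar (totalShear h H X Y) ξ = 0 := by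
  simp only [apply_totalShear_eq_inner hTh hH]
  refine ⟨fun h0 X Y => by simp [h0], fun h0 => LinearMap.ext fun X => ?_⟩
  exact inner_self_eq_zero.mp (h0 X _)

end Shear

theorem stmt5_general
    {n : ℕ}
    {V : Type*} [NormedAddCommGroup V] [InnerProductSpace ℝ V] [FiniteDimensional ℝ V]
    (hV : Module.finrank ℝ V = n)
    {W : Type*} [AddCommGroup W] [Module ℝ W] [FiniteDimensional ℝ W]
    (hW : Module.finrank ℝ W = 2)
    (gbar : W →ₗ[ℝ] W →ₗ[ℝ] ℝ)
    (hgsymm : ∀ ξ η : W, gbar ξ η = gbar η ξ)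
    (hgnd : ∀ ξ : W, (∀ η : W, gbar ξ η = 0) → ξ = 0)
    (h : V →ₗ[ℝ] V →ₗ[ℝ] W) (hsymm : ∀ X Y : V, h X Y = h Y X)
    (A : W →ₗ[ℝ] V →ₗ[ℝ] V)
    (hAh : ∀ (ξ : W) (X Y : V), ⟪A ξ X, Y⟫ = gbar (h X Y) ξ)
    (H : W) (hH : ∀ ξ : W, gbar H ξ = (LinearMap.trace ℝ V (A ξ)) / (n : ℝ))
    (ht : V → V → W) (hht : ∀ X Y : V, ht X Y = h X Y - ⟪X, Y⟫ • H)
    (At : W → (V →ₗ[ℝ] V))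
    (hAt : ∀ ξ : W, At ξ = A ξ - ((LinearMap.trace ℝ V (A ξ)) / (n : ℝ)) • (LinearMap.id : V →ₗ[ℝ] V))
    :
    (∃ ξ : W, ξ ≠ 0 ∧ At ξ = 0) ↔
      ∃ (A0 : V →ₗ[ℝ] V) (G : W),
        (∀ X Y : V, ⟪A0 X, Y⟫ = ⟪X, A0 Y⟫) ∧
        LinearMap.trace ℝ V (A0 ∘ₗ A0) = (n : ℝ) ^ 2 ∧
        ∀ X Y : V, ht X Y = ⟪A0 X, Y⟫ • G := by
  have hht' : ∀ X Y, ht X Y = totalShear h H X Y := hht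
  simp only [hht', hAt]
  constructor
  · rintro ⟨ξ, hξ0, hξ⟩
    have hkill := (sub_smul_id_eq_zero_iff (hAh ξ) (hH ξ)).mp hξ
    have hψ : gbar.flip ξ ≠ 0 := fun h0 =>
      hξ0 (hgnd ξ fun η => by simpa [hgsymm ξ η] using LinearMap.congr_fun h0 η)
    obtain ⟨f, G₀, hfG₀⟩ := Dual.exists_smul_eq_of_apply_eq_zero hψ hW
    obtain ⟨B, hB, hBf⟩ := exists_isSymmetric_inner_eq ((totalShear h H).compr₂ f)
      fun X Y => by rw [LinearMap.compr₂_apply, LinearMap.compr₂_apply, totalShear_comm hsymm]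
    obtain ⟨A₀, G, hA₀, htr, hA₀B⟩ := exists_isSymmetric_trace_comp_self_eq_sq hV hB G₀
    refine ⟨A₀, G, hA₀, htr, fun X Y => ?_⟩
    rw [← hA₀B, hBf, LinearMap.compr₂_apply, hfG₀ _ (hkill X Y)]
  · rintro ⟨A₀, G, -, -, hrep⟩
    obtain ⟨ξ, hGξ, hξ0⟩ := Submodule.exists_mem_ne_zero_of_ne_bot
      (LinearMap.ker_ne_bot_of_finrank_lt (f := gbar G) (by rw [finrank_self, hW]; norm_num))
    refine ⟨ξ, hξ0, (sub_smul_id_eq_zero_iff (hAh ξ) (hH ξ)).mpr fun X Y => ?_⟩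
    rw [hrep, map_smul, LinearMap.smul_apply, hGξ, smul_zero]

theorem stmt5
    {n : ℕ} (hn : 1 ≤ n)
    {V : Type*} [NormedAddCommGroup V] [InnerProductSpace ℝ V] [FiniteDimensional ℝ V]
    (hV : Module.finrank ℝ V = n)
    {W : Type*} [AddCommGroup W] [Module ℝ W] [FiniteDimensional ℝ W]
    (hW : Module.finrank ℝ W = 2)
    (gbar : W →ₗ[ℝ] W →ₗ[ℝ] ℝ)
    (hgsymm : ∀ ξ η : W, gbar ξ η = gbar η ξ)
    (hgnd : ∀ ξ : W, (∀ η : W, gbar ξ η = 0) → ξ = 0)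
    (h : V →ₗ[ℝ] V →ₗ[ℝ] W) (hsymm : ∀ X Y : V, h X Y = h Y X)
    (A : W →ₗ[ℝ] V →ₗ[ℝ] V)
    (hAsa : ∀ (ξ : W) (X Y : V), ⟪A ξ X, Y⟫ = ⟪X, A ξ Y⟫)
    (hAh : ∀ (ξ : W) (X Y : V), ⟪A ξ X, Y⟫ = gbar (h X Y) ξ)
    (H : W) (hH : ∀ ξ : W, gbar H ξ = (LinearMap.trace ℝ V (A ξ)) / (n : ℝ))
    (ht : V → V → W) (hht : ∀ X Y : V, ht X Y = h X Y - ⟪X, Y⟫ • H)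
    (At : W → (V →ₗ[ℝ] V))
    (hAt : ∀ ξ : W, At ξ = A ξ - ((LinearMap.trace ℝ V (A ξ)) / (n : ℝ)) • (LinearMap.id : V →ₗ[ℝ] V))
    :
    (∃ ξ : W, ξ ≠ 0 ∧ At ξ = 0) ↔
      ∃ (A0 : V →ₗ[ℝ] V) (G : W),
        (∀ X Y : V, ⟪A0 X, Y⟫ = ⟪X, A0 Y⟫) ∧
        LinearMap.trace ℝ V (A0 ∘ₗ A0) = (n : ℝ) ^ 2 ∧
        ∀ X Y : V, ht X Y = ⟪A0 X, Y⟫ • G :=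
  stmt5_general hV hW gbar hgsymm hgnd h hsymm A hAh H hH ht hht At hAt
end

section
/- In the pointwise setting of a spacelike codimension-2 immersion, there exists a nonzero ξ ∈ W with Ã_ξ = 0 if and only if for all η₁, η₂ ∈ W and all X, Y ∈ V one has ⟨Ã_{η₁} X, Y⟩ · Ã_{η₂} = ⟨Ã_{η₂} X, Y⟩ · Ã_{η₁} as operators on V (the coordinate-free form of the component condition (Ã_{η₁})ⁱⱼ (Ã_{η₂})ʳₛ = (Ã_{η₂})ⁱⱼ (Ã_{η₁})ʳₛ). -/
open scoped RealInnerProductSpace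

theorem stmt6
    {n : ℕ} (hn : 1 ≤ n)
    {V : Type*} [NormedAddCommGroup V] [InnerProductSpace ℝ V] [FiniteDimensional ℝ V]
    (hV : Module.finrank ℝ V = n)
    {W : Type*} [AddCommGroup W] [Module ℝ W] [FiniteDimensional ℝ W]
    (hW : Module.finrank ℝ W = 2)
    (gbar : W →ₗ[ℝ] W →ₗ[ℝ] ℝ)
    (hgsymm : ∀ ξ η : W, gbar ξ η = gbar η ξ)
    (hgnd : ∀ ξ : W, (∀ η : W, gbar ξ η = 0) → ξ = 0)
    (h : V →ₗ[ℝ] V →ₗ[ℝ] W) (hsymm : ∀ X Y : V, h X Y = h Y X)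
    (A : W →ₗ[ℝ] V →ₗ[ℝ] V)
    (hAsa : ∀ (ξ : W) (X Y : V), ⟪A ξ X, Y⟫ = ⟪X, A ξ Y⟫)
    (hAh : ∀ (ξ : W) (X Y : V), ⟪A ξ X, Y⟫ = gbar (h X Y) ξ)
    (At : W → (V →ₗ[ℝ] V))
    (hAt : ∀ ξ : W, At ξ = A ξ - ((LinearMap.trace ℝ V (A ξ)) / (n : ℝ)) • (LinearMap.id : V →ₗ[ℝ] V))
    :
    (∃ ξ : W, ξ ≠ 0 ∧ At ξ = 0) ↔
      ∀ (η₁ η₂ : W) (X Y : V),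
        ⟪At η₁ X, Y⟫ • At η₂ = ⟪At η₂ X, Y⟫ • At η₁ := by
  -- At is linear in ξ
  set Atl : W →ₗ[ℝ] (V →ₗ[ℝ] V) :=
    { toFun := At
      map_add' := by
        intro x y
        simp only [hAt, map_add, add_div, add_smul]
        abel
      map_smul' := by
        intro c x
        simp only [hAt, map_smul, LinearMap.smul_apply, RingHom.id_apply,
          smul_eq_mul, mul_div_assoc, mul_smul, smul_sub]
      } with hAtl
  have hAtl' : ∀ ξ, At ξ = Atl ξ := fun ξ => rfl
  constructor
  · rintro ⟨ξ₀, hξ₀, hAξ₀⟩ η₁ η₂ X Y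
    -- the range of Atl is principal
    have hkermem : ξ₀ ∈ LinearMap.ker Atl := by
      simpa [LinearMap.mem_ker, ← hAtl'] using hAξ₀
    have hkerpos : 0 < Module.finrank ℝ (LinearMap.ker Atl) :=
      Module.finrank_pos_iff_exists_ne_zero.mpr
        ⟨⟨ξ₀, hkermem⟩, by simp [Subtype.ext_iff, hξ₀]⟩
    have hrn := LinearMap.finrank_range_add_finrank_ker Atl
    rw [hW] at hrn
    have hrle : Module.finrank ℝ (LinearMap.range Atl) ≤ 1 := by omega
    obtain ⟨B, hB⟩ := ((Submodule.finrank_le_one_iff_isPrincipal (LinearMap.range Atl)).mp hrle).principal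
    have hmem : ∀ η : W, ∃ a : ℝ, At η = a • B := by
      intro η
      have : At η ∈ LinearMap.range Atl := ⟨η, (hAtl' η).symm⟩
      rw [hB, Submodule.mem_span_singleton] at this
      obtain ⟨a, ha⟩ := this
      exact ⟨a, ha.symm⟩
    obtain ⟨a, ha⟩ := hmem η₁
    obtain ⟨b, hb⟩ := hmem η₂
    rw [ha, hb]
    simp only [LinearMap.smul_apply, real_inner_smul_left, smul_smul]
    ring_nf
  · intro hyp
    by_cases hz : ∀ η : W, At η = 0
    · -- At ≡ 0 : any nonzero ξ works
      have : 0 < Module.finrank ℝ W := by omega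
      obtain ⟨ξ, hξ⟩ := Module.finrank_pos_iff_exists_ne_zero.mp this
      exact ⟨ξ, hξ, hz ξ⟩
    · push_neg at hz
      obtain ⟨η₀, hη₀⟩ := hz
      -- find X, Y with ⟪At η₀ X, Y⟫ ≠ 0
      obtain ⟨X, hX⟩ : ∃ X, At η₀ X ≠ 0 := by
        by_contra hc
        push_neg at hc
        exact hη₀ (LinearMap.ext fun x => by simpa using hc x)
      set Y := At η₀ X with hY
      have hc : ⟪At η₀ X, Y⟫ ≠ 0 := by
        rw [hY]
        simpa [real_inner_self_eq_norm_sq] using hX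
      -- the linear functional η ↦ ⟪At η X, Y⟫ has nontrivial kernel
      set f : W →ₗ[ℝ] ℝ :=
        { toFun := fun η => ⟪At η X, Y⟫
          map_add' := by
            intro x y
            simp [hAtl', map_add, inner_add_left]
          map_smul' := by
            intro c x
            simp [hAtl', map_smul, real_inner_smul_left] } with hf
      have hkerne : LinearMap.ker f ≠ ⊥ := by
        intro hbot
        have hinj : Function.Injective f := LinearMap.ker_eq_bot.mp hbot
        have := LinearMap.finrank_le_finrank_of_injective hinj
        rw [hW, Module.finrank_self] at this
        omega
      obtain ⟨ξ, hξmem, hξne⟩ := Submodule.exists_mem_ne_zero_of_ne_bot hkerne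
      refine ⟨ξ, hξne, ?_⟩
      have hfξ : ⟪At ξ X, Y⟫ = 0 := hξmem
      have := hyp ξ η₀ X Y
      rw [hfξ, zero_smul] at this
      have := this.symm
      rcases smul_eq_zero.mp this with hc' | hz'
      · exact absurd hc' hc
      · exact hz'
end

section
/- In the pointwise setting of a spacelike codimension-2 immersion, there exists a nonzero ξ ∈ W with Ã_ξ = 0 if and only if for all η₁, η₂ ∈ W the shear operators satisfy the Cauchy–Schwarz equality (tr(Ã_{η₁} ∘ Ã_{η₂}))² = tr(Ã_{η₁} ∘ Ã_{η₁}) · tr(Ã_{η₂} ∘ Ã_{η₂}). -/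
/-!
The shear operators form a linear map `W → End V` with self-adjoint values, and
`(S, T) ↦ tr (S ∘ T)` is positive definite on self-adjoint operators. For a form that is
anisotropic on the image of a linear map out of a plane, the Cauchy–Schwarz equality for all pairs
in the image holds exactly when the image is at most a line, i.e. when the kernel is nontrivial:
given two independent vectors `e₁, e₂` with `B e₁ ≠ 0`, equality makes the Gram–Schmidt component
`Q(Be₁, Be₁) Be₂ - Q(Be₁, Be₂) Be₁` isotropic, hence zero.
-/

open scoped RealInnerProductSpace

open Module LinearMap

namespace LinearMap.BilinForm

variable {K M : Type*} [Field K] [AddCommGroup M] [Module K M] (Q : LinearMap.BilinForm K M)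

lemma sq_apply_eq_mul_of_mem_span_singleton {v x y : M} (hx : x ∈ K ∙ v) (hy : y ∈ K ∙ v) :
    Q x y ^ 2 = Q x x * Q y y := by
  obtain ⟨a, rfl⟩ := Submodule.mem_span_singleton.mp hx
  obtain ⟨b, rfl⟩ := Submodule.mem_span_singleton.mp hy
  simp only [map_smul, smul_apply, smul_eq_mul]
  ring

lemma apply_smul_sub_smul_self (hQ : Q.IsSymm) (x y : M) :
    Q (Q x x • y - Q x y • x) (Q x x • y - Q x y • x) = Q x x * (Q x x * Q y y - Q x y ^ 2) := by
  simp only [map_sub, map_smul, LinearMap.sub_apply, LinearMap.smul_apply, smul_eq_mul, hQ.eq y x]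
  ring

end LinearMap.BilinForm

section CauchySchwarzEquality

variable {K W M : Type*} [Field K] [AddCommGroup W] [Module K W] [AddCommGroup M] [Module K M]
  (B : W →ₗ[K] M) (Q : LinearMap.BilinForm K M)

lemma sq_apply_eq_mul_of_exists_ne_zero_map_eq_zero (hW : finrank K W = 2)
    (hker : ∃ ξ, ξ ≠ 0 ∧ B ξ = 0) (η₁ η₂ : W) :
    Q (B η₁) (B η₂) ^ 2 = Q (B η₁) (B η₁) * Q (B η₂) (B η₂) := by
  have : FiniteDimensional K W := Module.finite_of_finrank_eq_succ hW
  obtain ⟨ξ, hξ, hBξ⟩ := hker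
  have hker_pos : 0 < finrank K (ker B) :=
    finrank_pos_iff_exists_ne_zero.mpr ⟨⟨ξ, hBξ⟩, fun h ↦ hξ (congrArg Subtype.val h)⟩
  have hrange : finrank K (range B) ≤ 1 := by
    have := B.finrank_range_add_finrank_ker
    omega
  obtain ⟨v, hv⟩ := ((range B).finrank_le_one_iff_isPrincipal.mp hrange).principal
  exact Q.sq_apply_eq_mul_of_mem_span_singleton (v := v)
    (hv ▸ mem_range_self B η₁) (hv ▸ mem_range_self B η₂)

lemma exists_ne_zero_map_eq_zero_of_sq_apply_eq_mul (hQ : Q.IsSymm)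
    (hQB : ∀ ξ, Q (B ξ) (B ξ) = 0 → B ξ = 0) {e₁ e₂ : W} (he : LinearIndependent K ![e₁, e₂])
    (hcs : Q (B e₁) (B e₂) ^ 2 = Q (B e₁) (B e₁) * Q (B e₂) (B e₂)) :
    ∃ ξ, ξ ≠ 0 ∧ B ξ = 0 := by
  by_cases h₁ : B e₁ = 0
  · exact ⟨e₁, he.ne_zero 0, h₁⟩
  have hQ₁ : Q (B e₁) (B e₁) ≠ 0 := fun h ↦ h₁ (hQB e₁ h)
  set ξ := Q (B e₁) (B e₁) • e₂ - Q (B e₁) (B e₂) • e₁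
  refine ⟨ξ, fun h ↦ hQ₁ ?_, hQB ξ ?_⟩
  · refine (LinearIndependent.pair_iff.mp he (-Q (B e₁) (B e₂)) (Q (B e₁) (B e₁)) ?_).2
    rw [← h]
    module
  · have hBξ : B ξ = Q (B e₁) (B e₁) • B e₂ - Q (B e₁) (B e₂) • B e₁ := by
      simp only [ξ, map_sub, map_smul]
    rw [hBξ, LinearMap.BilinForm.apply_smul_sub_smul_self Q hQ, hcs, sub_self, mul_zero]

theorem exists_ne_zero_map_eq_zero_iff_sq_apply_eq_mul (hW : finrank K W = 2) (hQ : Q.IsSymm)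
    (hQB : ∀ ξ, Q (B ξ) (B ξ) = 0 → B ξ = 0) :
    (∃ ξ, ξ ≠ 0 ∧ B ξ = 0) ↔
      ∀ η₁ η₂, Q (B η₁) (B η₂) ^ 2 = Q (B η₁) (B η₁) * Q (B η₂) (B η₂) := by
  refine ⟨sq_apply_eq_mul_of_exists_ne_zero_map_eq_zero B Q hW, fun hcs ↦ ?_⟩
  obtain ⟨e₁, e₂, he⟩ : ∃ e₁ e₂ : W, LinearIndependent K ![e₁, e₂] := by
    have : FiniteDimensional K W := Module.finite_of_finrank_eq_succ hW
    let b := Module.finBasisOfFinrankEq K W hW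
    refine ⟨b 0, b 1, ?_⟩
    convert b.linearIndependent
    ext i
    fin_cases i <;> rfl
  exact exists_ne_zero_map_eq_zero_of_sq_apply_eq_mul B Q hQ hQB he (hcs e₁ e₂)

end CauchySchwarzEquality

namespace LinearMap

variable {K V : Type*} [Field K] [AddCommGroup V] [Module K V]

variable (K V) in
noncomputable def traceForm : LinearMap.BilinForm K (Module.End K V) :=
  (LinearMap.mul K (Module.End K V)).compr₂ (trace K V)

lemma traceForm_isSymm : (traceForm K V).IsSymm :=
  ⟨fun S T ↦ trace_mul_comm K S T⟩

noncomputable def shearOperator (n : K) : Module.End K (Module.End K V) :=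
  LinearMap.id - n⁻¹ • (trace K V).smulRight LinearMap.id

lemma shearOperator_apply (n : K) (T : Module.End K V) :
    shearOperator n T = T - (trace K V T / n) • LinearMap.id := by
  simp [shearOperator, div_eq_inv_mul, mul_smul]

end LinearMap

namespace LinearMap.IsSymmetric

variable {𝕜 E : Type*} [RCLike 𝕜] [NormedAddCommGroup E] [InnerProductSpace 𝕜 E]
  {T : E →ₗ[𝕜] E}

lemma trace_comp_self {ι : Type*} [Fintype ι] (hT : T.IsSymmetric) (b : OrthonormalBasis ι 𝕜 E) :
    trace 𝕜 E (T ∘ₗ T) = ∑ i, (‖T (b i)‖ ^ 2 : 𝕜) := by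
  rw [trace_eq_sum_inner _ b]
  refine Finset.sum_congr rfl fun i _ ↦ ?_
  rw [comp_apply, ← hT, inner_self_eq_norm_sq_to_K]

lemma trace_comp_self_eq_zero_iff [FiniteDimensional 𝕜 E] (hT : T.IsSymmetric) :
    trace 𝕜 E (T ∘ₗ T) = 0 ↔ T = 0 := by
  refine ⟨fun h ↦ ?_, fun h ↦ by simp [h]⟩
  set b := stdOrthonormalBasis 𝕜 E
  rw [hT.trace_comp_self b] at h
  norm_cast at h
  rw [Finset.sum_eq_zero_iff_of_nonneg fun _ _ ↦ by positivity] at h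
  exact b.toBasis.ext fun i ↦ by simpa using h i (Finset.mem_univ i)

lemma shearOperator {V : Type*} [NormedAddCommGroup V] [InnerProductSpace ℝ V]
    {T : V →ₗ[ℝ] V} (hT : T.IsSymmetric) (n : ℝ) : (LinearMap.shearOperator n T).IsSymmetric := by
  rw [shearOperator_apply]
  exact hT.sub (IsSymmetric.id.smul (conj_trivial _))

end LinearMap.IsSymmetric

theorem stmt7_general
    {n : ℕ}
    {V : Type*} [NormedAddCommGroup V] [InnerProductSpace ℝ V] [FiniteDimensional ℝ V]
    {W : Type*} [AddCommGroup W] [Module ℝ W]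
    (hW : Module.finrank ℝ W = 2)
    (A : W →ₗ[ℝ] V →ₗ[ℝ] V)
    (hAsa : ∀ (ξ : W) (X Y : V), ⟪A ξ X, Y⟫ = ⟪X, A ξ Y⟫)
    (At : W → (V →ₗ[ℝ] V))
    (hAt : ∀ ξ : W, At ξ = A ξ - ((LinearMap.trace ℝ V (A ξ)) / (n : ℝ)) • (LinearMap.id : V →ₗ[ℝ] V))
    :
    (∃ ξ : W, ξ ≠ 0 ∧ At ξ = 0) ↔
      ∀ η₁ η₂ : W,
        (LinearMap.trace ℝ V (At η₁ ∘ₗ At η₂)) ^ 2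
          = LinearMap.trace ℝ V (At η₁ ∘ₗ At η₁) * LinearMap.trace ℝ V (At η₂ ∘ₗ At η₂) := by
  obtain rfl : At = shearOperator (n : ℝ) ∘ₗ A :=
    funext fun ξ ↦ (hAt ξ).trans (shearOperator_apply _ _).symm
  have hsymm (ξ : W) : (shearOperator (n : ℝ) (A ξ)).IsSymmetric :=
    IsSymmetric.shearOperator (hAsa ξ) n
  exact exists_ne_zero_map_eq_zero_iff_sq_apply_eq_mul _ (traceForm ℝ V) hW traceForm_isSymm
    fun ξ h ↦ (hsymm ξ).trace_comp_self_eq_zero_iff.mp h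

theorem stmt7
    {n : ℕ} (hn : 1 ≤ n)
    {V : Type*} [NormedAddCommGroup V] [InnerProductSpace ℝ V] [FiniteDimensional ℝ V]
    (hV : Module.finrank ℝ V = n)
    {W : Type*} [AddCommGroup W] [Module ℝ W] [FiniteDimensional ℝ W]
    (hW : Module.finrank ℝ W = 2)
    (gbar : W →ₗ[ℝ] W →ₗ[ℝ] ℝ)
    (hgsymm : ∀ ξ η : W, gbar ξ η = gbar η ξ)
    (hgnd : ∀ ξ : W, (∀ η : W, gbar ξ η = 0) → ξ = 0)
    (h : V →ₗ[ℝ] V →ₗ[ℝ] W) (hsymm : ∀ X Y : V, h X Y = h Y X)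
    (A : W →ₗ[ℝ] V →ₗ[ℝ] V)
    (hAsa : ∀ (ξ : W) (X Y : V), ⟪A ξ X, Y⟫ = ⟪X, A ξ Y⟫)
    (hAh : ∀ (ξ : W) (X Y : V), ⟪A ξ X, Y⟫ = gbar (h X Y) ξ)
    (At : W → (V →ₗ[ℝ] V))
    (hAt : ∀ ξ : W, At ξ = A ξ - ((LinearMap.trace ℝ V (A ξ)) / (n : ℝ)) • (LinearMap.id : V →ₗ[ℝ] V))
    :
    (∃ ξ : W, ξ ≠ 0 ∧ At ξ = 0) ↔
      ∀ η₁ η₂ : W,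
        (LinearMap.trace ℝ V (At η₁ ∘ₗ At η₂)) ^ 2
          = LinearMap.trace ℝ V (At η₁ ∘ₗ At η₁) * LinearMap.trace ℝ V (At η₂ ∘ₗ At η₂) :=
  stmt7_general hW A hAsa At hAt
end

section
/- In the pointwise setting of a spacelike codimension-2 immersion, if there exists a nonzero ξ ∈ W with Ã_ξ = 0, then any two shape operators commute: A_{η₁} ∘ A_{η₂} = A_{η₂} ∘ A_{η₁} for all η₁, η₂ ∈ W. -/
open scoped RealInnerProductSpace

theorem stmt8
    {n : ℕ} (hn : 1 ≤ n)
    {V : Type*} [NormedAddCommGroup V] [InnerProductSpace ℝ V] [FiniteDimensional ℝ V]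
    (hV : Module.finrank ℝ V = n)
    {W : Type*} [AddCommGroup W] [Module ℝ W] [FiniteDimensional ℝ W]
    (hW : Module.finrank ℝ W = 2)
    (gbar : W →ₗ[ℝ] W →ₗ[ℝ] ℝ)
    (hgsymm : ∀ ξ η : W, gbar ξ η = gbar η ξ)
    (hgnd : ∀ ξ : W, (∀ η : W, gbar ξ η = 0) → ξ = 0)
    (h : V →ₗ[ℝ] V →ₗ[ℝ] W) (hsymm : ∀ X Y : V, h X Y = h Y X)
    (A : W →ₗ[ℝ] V →ₗ[ℝ] V)
    (hAsa : ∀ (ξ : W) (X Y : V), ⟪A ξ X, Y⟫ = ⟪X, A ξ Y⟫)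
    (hAh : ∀ (ξ : W) (X Y : V), ⟪A ξ X, Y⟫ = gbar (h X Y) ξ)
    (At : W → (V →ₗ[ℝ] V))
    (hAt : ∀ ξ : W, At ξ = A ξ - ((LinearMap.trace ℝ V (A ξ)) / (n : ℝ)) • (LinearMap.id : V →ₗ[ℝ] V))
    :
    (∃ ξ : W, ξ ≠ 0 ∧ At ξ = 0) →
      ∀ η₁ η₂ : W, A η₁ ∘ₗ A η₂ = A η₂ ∘ₗ A η₁ := by

  rintro ⟨ξ, hξ0, hξu⟩ η₁ η₂
  set c := (LinearMap.trace ℝ V (A ξ)) / (n : ℝ) with hc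
  have hAξ : A ξ = c • (LinearMap.id : V →ₗ[ℝ] V) := by
    have h1 := hAt ξ
    rw [hξu] at h1
    have := sub_eq_zero.mp h1.symm
    exact this
  have key : ∀ (d : ℝ) (S T : V →ₗ[ℝ] V), S = d • (LinearMap.id : V →ₗ[ℝ] V) →
      S ∘ₗ T = T ∘ₗ S := by
    intro d S T hS
    rw [hS]; ext x; simp
  have hcomm : ∀ T : V →ₗ[ℝ] V, A ξ ∘ₗ T = T ∘ₗ A ξ := fun T => key c _ T hAξ
  by_cases hdep : ∃ t : ℝ, η₁ = t • ξ
  · obtain ⟨t, rfl⟩ := hdep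
    have h2 : A (t • ξ) = (t * c) • (LinearMap.id : V →ₗ[ℝ] V) := by
      rw [map_smul, hAξ, smul_smul]
    rw [key (t * c) _ _ h2]
  · have hli : LinearIndependent ℝ ![ξ, η₁] := by
      rw [LinearIndependent.pair_iff]
      intro s t hst
      by_contra hne
      rcases eq_or_ne t 0 with ht | ht
      · subst ht
        simp only [zero_smul, add_zero] at hst
        rcases smul_eq_zero.mp hst with hs | hx
        · exact hne ⟨hs, rfl⟩
        · exact hξ0 hx
      · apply hdep
        refine ⟨-s / t, ?_⟩
        have h3 : t • η₁ = (-s) • ξ := by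
          rw [neg_smul]
          exact eq_neg_of_add_eq_zero_right hst
        have := congrArg (fun w => t⁻¹ • w) h3
        simpa [smul_smul, inv_mul_cancel₀ ht, neg_div, div_eq_inv_mul] using this
    have hb : Fintype.card (Fin 2) = Module.finrank ℝ W := by simp [hW]
    let b := basisOfLinearIndependentOfCardEqFinrank hli hb
    obtain ⟨a, d, hη₂⟩ : ∃ a d : ℝ, η₂ = a • ξ + d • η₁ := by
      refine ⟨b.repr η₂ 0, b.repr η₂ 1, ?_⟩
      have := b.sum_repr η₂
      rw [Fin.sum_univ_two] at this
      have hb0 : b 0 = ξ := by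
        simp [b, coe_basisOfLinearIndependentOfCardEqFinrank]
      have hb1 : b 1 = η₁ := by
        simp [b, coe_basisOfLinearIndependentOfCardEqFinrank]
      rw [hb0, hb1] at this
      exact this.symm
    rw [hη₂, map_add, map_smul, map_smul, LinearMap.comp_add, LinearMap.add_comp,
      LinearMap.comp_smul, LinearMap.smul_comp, LinearMap.comp_smul, LinearMap.smul_comp,
      hcomm]
end

section
/- In the pointwise setting of a spacelike codimension-2 immersion with n = 2 (a spacelike surface in a 4-dimensional semi-Riemannian manifold), there exists a nonzero ξ ∈ W with Ã_ξ = 0 if and only if any two shape operators commute: A_{η₁} ∘ A_{η₂} = A_{η₂} ∘ A_{η₁} for all η₁, η₂ ∈ W. -/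
open scoped RealInnerProductSpace

lemma matcomm {M N : Matrix (Fin 2) (Fin 2) ℝ} (hM : M.trace = 0) (hN : N.trace = 0)
    (hc : M * N = N * M) (hM0 : M ≠ 0) : ∃ c : ℝ, N = c • M := by
  have hMa : M 1 1 = -M 0 0 := by
    simp [Matrix.trace, Fin.sum_univ_two, Matrix.diag] at hM; linarith
  have hNa : N 1 1 = -N 0 0 := by
    simp [Matrix.trace, Fin.sum_univ_two, Matrix.diag] at hN; linarith
  have e00 := congrFun (congrFun hc 0) 0
  have e01 := congrFun (congrFun hc 0) 1
  have e10 := congrFun (congrFun hc 1) 0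
  simp [Matrix.mul_apply, Fin.sum_univ_two, hMa, hNa] at e00 e01 e10
  have h1 : M 0 0 * N 0 1 = M 0 1 * N 0 0 := by linarith
  have h2 : M 1 0 * N 0 0 = M 0 0 * N 1 0 := by linarith
  have h3 : M 0 1 * N 1 0 = N 0 1 * M 1 0 := by linarith
  have hcase : M 0 0 ≠ 0 ∨ M 0 1 ≠ 0 ∨ M 1 0 ≠ 0 := by
    by_contra hcon
    push_neg at hcon
    apply hM0
    ext i j
    fin_cases i <;> fin_cases j <;>
      simp [hcon.1, hcon.2.1, hcon.2.2, hMa]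
  rcases hcase with ha | hb | hcc
  · refine ⟨N 0 0 / M 0 0, ?_⟩
    ext i j
    fin_cases i <;> fin_cases j <;> simp [hMa, hNa] <;> field_simp <;> linarith [h1, h2]
  · rcases eq_or_ne (M 0 0) 0 with ha0 | ha0
    · have hd0 : N 0 0 = 0 := by
        have := h1; rw [ha0] at this; simp at this
        exact this.resolve_left hb
      refine ⟨N 0 1 / M 0 1, ?_⟩
      ext i j
      fin_cases i <;> fin_cases j <;> simp [hMa, hNa, ha0, hd0] <;> field_simp <;> linarith [h3]
    · refine ⟨N 0 0 / M 0 0, ?_⟩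
      ext i j
      fin_cases i <;> fin_cases j <;> simp [hMa, hNa] <;> field_simp <;> linarith [h1, h2]
  · rcases eq_or_ne (M 0 0) 0 with ha0 | ha0
    · have hd0 : N 0 0 = 0 := by
        have := h2; rw [ha0] at this; simp at this
        exact this.resolve_left hcc
      rcases eq_or_ne (M 0 1) 0 with hb0 | hb0
      · have he0 : N 0 1 = 0 := by
          have := h3; rw [hb0] at this; simp at this
          exact this.resolve_right hcc
        refine ⟨N 1 0 / M 1 0, ?_⟩
        ext i j
        fin_cases i <;> fin_cases j <;> simp [hMa, hNa, ha0, hb0, hd0, he0] <;> field_simp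
      · refine ⟨N 0 1 / M 0 1, ?_⟩
        ext i j
        fin_cases i <;> fin_cases j <;> simp [hMa, hNa, ha0, hd0] <;> field_simp <;> linarith [h3]
    · refine ⟨N 0 0 / M 0 0, ?_⟩
      ext i j
      fin_cases i <;> fin_cases j <;> simp [hMa, hNa] <;> field_simp <;> linarith [h1, h2]

lemma comm_of_smul_rel {R A' : Type*} [Field R] [Ring A'] [Algebra R A'] {b x y : R} {P Q : A'}
    (hb : b ≠ 0) (hrel : b • Q = x • (1 : A') + y • P) : P * Q = Q * P := by
  have hQ : Q = b⁻¹ • (x • (1 : A') + y • P) := by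
    rw [← hrel, smul_smul, inv_mul_cancel₀ hb, one_smul]
  rw [hQ]
  simp [mul_add, add_mul, mul_smul_comm, smul_mul_assoc]

theorem stmt9
    {V : Type*} [NormedAddCommGroup V] [InnerProductSpace ℝ V] [FiniteDimensional ℝ V]
    (hV : Module.finrank ℝ V = 2)
    {W : Type*} [AddCommGroup W] [Module ℝ W] [FiniteDimensional ℝ W]
    (hW : Module.finrank ℝ W = 2)
    (gbar : W →ₗ[ℝ] W →ₗ[ℝ] ℝ)
    (hgsymm : ∀ ξ η : W, gbar ξ η = gbar η ξ)
    (hgnd : ∀ ξ : W, (∀ η : W, gbar ξ η = 0) → ξ = 0)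
    (h : V →ₗ[ℝ] V →ₗ[ℝ] W) (hsymm : ∀ X Y : V, h X Y = h Y X)
    (A : W →ₗ[ℝ] V →ₗ[ℝ] V)
    (hAsa : ∀ (ξ : W) (X Y : V), ⟪A ξ X, Y⟫ = ⟪X, A ξ Y⟫)
    (hAh : ∀ (ξ : W) (X Y : V), ⟪A ξ X, Y⟫ = gbar (h X Y) ξ)
    (At : W → (V →ₗ[ℝ] V))
    (hAt : ∀ ξ : W, At ξ = A ξ - ((LinearMap.trace ℝ V (A ξ)) / (2 : ℝ)) • (LinearMap.id : V →ₗ[ℝ] V))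
    :
    (∃ ξ : W, ξ ≠ 0 ∧ At ξ = 0) ↔
      ∀ η₁ η₂ : W, A η₁ ∘ₗ A η₂ = A η₂ ∘ₗ A η₁ := by
  constructor
  · -- forward: umbilical direction exists → all commute
    rintro ⟨ξ, hξ0, hξu⟩ η₁ η₂
    -- A ξ = s • id
    set s : ℝ := LinearMap.trace ℝ V (A ξ) / 2 with hs
    have hAξ : A ξ = s • (LinearMap.id : V →ₗ[ℝ] V) := by
      have := hAt ξ
      rw [hξu] at this
      linear_combination (norm := module) -this
    -- three vectors in 2-dim W are dependent
    have hdep : ¬ LinearIndependent ℝ ![ξ, η₁, η₂] := by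
      intro hli
      have := hli.fintype_card_le_finrank
      simp [hW] at this
    rw [Fintype.not_linearIndependent_iff] at hdep
    obtain ⟨g, hgsum, i, hgi⟩ := hdep
    rw [Fin.sum_univ_three] at hgsum
    simp only [Matrix.cons_val_zero, Matrix.cons_val_one, Matrix.head_cons,
      Matrix.cons_val_two, Matrix.tail_cons] at hgsum
    have hAsum : g 0 • A ξ + g 1 • A η₁ + g 2 • A η₂ = 0 := by
      rw [← map_smul, ← map_smul, ← map_smul, ← map_add, ← map_add, hgsum, map_zero]
    -- work in the endomorphism ring
    show (A η₁ : Module.End ℝ V) * A η₂ = A η₂ * A η₁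
    rcases eq_or_ne (g 1) 0 with hg1 | hg1
    · rcases eq_or_ne (g 2) 0 with hg2 | hg2
      · -- then g 0 ≠ 0 and ξ = 0, contradiction
        exfalso
        have hg0 : g 0 ≠ 0 := by
          fin_cases i
          · exact hgi
          · exact absurd hg1 hgi
          · exact absurd hg2 hgi
        rw [hg1, hg2] at hgsum
        simp at hgsum
        rcases hgsum with h' | h'
        · exact hg0 h'
        · exact hξ0 h'
      · -- A η₂ is a multiple of identity
        have hrel : g 2 • (A η₂ : Module.End ℝ V) = (-(g 0 * s)) • 1 + (0 : ℝ) • (A η₁ : Module.End ℝ V) := by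
          have : g 2 • A η₂ = -(g 0 • A ξ) - g 1 • A η₁ := by
            linear_combination (norm := module) hAsum
          rw [this, hAξ, hg1]
          ext v
          simp [neg_smul, mul_smul, sub_eq_add_neg]
        exact comm_of_smul_rel hg2 hrel
    · have hrel : g 1 • (A η₁ : Module.End ℝ V) = (-(g 0 * s)) • 1 + (-(g 2)) • (A η₂ : Module.End ℝ V) := by
        have : g 1 • A η₁ = -(g 0 • A ξ) - g 2 • A η₂ := by
          linear_combination (norm := module) hAsum
        rw [this, hAξ]
        ext v
        simp [neg_smul, mul_smul, sub_eq_add_neg]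
      exact (comm_of_smul_rel hg1 hrel).symm
  · -- reverse: all commute → umbilical direction exists
    intro hcomm
    obtain bV := Module.finBasisOfFinrankEq ℝ V hV
    obtain bW := Module.finBasisOfFinrankEq ℝ W hW
    set S := At (bW 0) with hS
    set T := At (bW 1) with hT
    -- trace-free
    have htr : ∀ η : W, LinearMap.trace ℝ V (At η) = 0 := by
      intro η
      rw [hAt, map_sub, map_smul, LinearMap.trace_id, hV]
      simp
    -- At's commute
    have hAtcomm : ∀ η₁ η₂ : W, (At η₁ : Module.End ℝ V) * At η₂ = At η₂ * At η₁ := by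
      intro η₁ η₂
      have hc : (A η₁ : Module.End ℝ V) * A η₂ = A η₂ * A η₁ := hcomm η₁ η₂
      rw [hAt η₁, hAt η₂]
      have hid : (LinearMap.id : V →ₗ[ℝ] V) = (1 : Module.End ℝ V) := rfl
      rw [hid]
      set p := LinearMap.trace ℝ V (A η₁) / 2
      set q := LinearMap.trace ℝ V (A η₂) / 2
      show ((A η₁ : Module.End ℝ V) - p • 1) * ((A η₂ : Module.End ℝ V) - q • 1)
        = ((A η₂ : Module.End ℝ V) - q • 1) * ((A η₁ : Module.End ℝ V) - p • 1)
      simp only [sub_mul, mul_sub, smul_mul_assoc, mul_smul_comm, mul_one, one_mul, smul_smul]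
      rw [hc]
      module
    -- to matrices
    set MS := LinearMap.toMatrix bV bV S with hMS
    set MT := LinearMap.toMatrix bV bV T with hMT
    rcases eq_or_ne S 0 with hS0 | hS0
    · exact ⟨bW 0, bW.ne_zero 0, by rw [← hS, hS0]⟩
    · have hMS0 : MS ≠ 0 := by
        intro hz
        apply hS0
        apply (LinearMap.toMatrix bV bV).injective
        rw [← hMS, hz, map_zero]
      have htrS : MS.trace = 0 := by
        rw [hMS, ← LinearMap.trace_eq_matrix_trace]; exact htr _
      have htrT : MT.trace = 0 := by
        rw [hMT, ← LinearMap.trace_eq_matrix_trace]; exact htr _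
      have hcM : MS * MT = MT * MS := by
        rw [hMS, hMT, ← LinearMap.toMatrix_comp bV bV bV, ← LinearMap.toMatrix_comp bV bV bV]
        exact congrArg _ (hAtcomm (bW 0) (bW 1))
      obtain ⟨c, hcrel⟩ := matcomm htrS htrT hcM hMS0
      have hTS : T = c • S := by
        apply (LinearMap.toMatrix bV bV).injective
        rw [← hMT, map_smul, ← hMS, hcrel]
      refine ⟨c • bW 0 - bW 1, ?_, ?_⟩
      · intro heq
        have h1 : bW.repr (c • bW 0 - bW 1) 1 = -1 := by
          simp [Module.Basis.repr_self, map_sub, map_smul]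
        rw [heq] at h1
        simp at h1
      · have hlin : At (c • bW 0 - bW 1) = c • At (bW 0) - At (bW 1) := by
          rw [hAt, hAt, hAt, map_sub, map_smul, map_sub, map_smul]
          match_scalars <;> simp only [smul_eq_mul] <;> ring
        rw [hlin, ← hS, ← hT, hTS]
        simp
end

section
/- In the pointwise setting of a spacelike codimension-2 immersion, suppose h̃(X,Y) = ⟨Ã₀ X, Y⟩ · G for all X, Y ∈ V, where Ã₀ : V → V is self-adjoint with tr(Ã₀ ∘ Ã₀) = n² and G ∈ W. If ξ ∈ W is nonzero and Ã_ξ = 0, then either G = 0 (in which case h̃ = 0, i.e. the immersion is totally umbilical) or ξ is a scalar multiple of the Hodge dual ⋆G. In particular the umbilical direction, when the immersion is not totally umbilical, is unique and spanned by ⋆G. -/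
open scoped RealInnerProductSpace

theorem stmt10
    {n : ℕ} (hn : 1 ≤ n)
    {V : Type*} [NormedAddCommGroup V] [InnerProductSpace ℝ V] [FiniteDimensional ℝ V]
    (hV : Module.finrank ℝ V = n)
    {W : Type*} [AddCommGroup W] [Module ℝ W] [FiniteDimensional ℝ W]
    (hW : Module.finrank ℝ W = 2)
    (gbar : W →ₗ[ℝ] W →ₗ[ℝ] ℝ)
    (hgsymm : ∀ ξ η : W, gbar ξ η = gbar η ξ)
    (hgnd : ∀ ξ : W, (∀ η : W, gbar ξ η = 0) → ξ = 0)
    (h : V →ₗ[ℝ] V →ₗ[ℝ] W) (hsymm : ∀ X Y : V, h X Y = h Y X)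
    (A : W →ₗ[ℝ] V →ₗ[ℝ] V)
    (hAsa : ∀ (ξ : W) (X Y : V), ⟪A ξ X, Y⟫ = ⟪X, A ξ Y⟫)
    (hAh : ∀ (ξ : W) (X Y : V), ⟪A ξ X, Y⟫ = gbar (h X Y) ξ)
    (H : W) (hH : ∀ ξ : W, gbar H ξ = (LinearMap.trace ℝ V (A ξ)) / (n : ℝ))
    (ht : V → V → W) (hht : ∀ X Y : V, ht X Y = h X Y - ⟪X, Y⟫ • H)
    (At : W → (V →ₗ[ℝ] V))
    (hAt : ∀ ξ : W, At ξ = A ξ - ((LinearMap.trace ℝ V (A ξ)) / (n : ℝ)) • (LinearMap.id : V →ₗ[ℝ] V))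
    (ω : W →ₗ[ℝ] W →ₗ[ℝ] ℝ) (hωalt : ∀ ξ : W, ω ξ ξ = 0) (hωne : ω ≠ 0)
    (sd : W → W) (hsd : ∀ ξ η : W, gbar (sd ξ) η = ω ξ η)
    (A0 : V →ₗ[ℝ] V) (hA0sa : ∀ X Y : V, ⟪A0 X, Y⟫ = ⟪X, A0 Y⟫)
    (hA0tr : LinearMap.trace ℝ V (A0 ∘ₗ A0) = (n : ℝ) ^ 2)
    (G : W) (hrep : ∀ X Y : V, ht X Y = ⟪A0 X, Y⟫ • G)
    :
    ∀ ξ : W, ξ ≠ 0 → At ξ = 0 →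
      (G = 0 ∧ ∀ X Y : V, ht X Y = 0) ∨ ∃ c : ℝ, ξ = c • sd G := by
  intro ξ hξne hAtξ
  by_cases hG : G = 0
  · left
    refine ⟨hG, fun X Y => ?_⟩
    rw [hrep, hG, smul_zero]
  · right
    -- ω is skew
    have hωskew : ∀ a b : W, ω a b = - ω b a := by
      intro a b
      have := hωalt (a + b)
      simp only [map_add, LinearMap.add_apply, hωalt] at this
      linarith
    -- nondegeneracy of ω
    have hωnd : ∀ x : W, (∀ y : W, ω x y = 0) → x = 0 := by
      intro x hx
      by_contra hxne
      -- get a, b with ω a b ≠ 0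
      obtain ⟨a, ha⟩ : ∃ a, ω a ≠ 0 := by
        by_contra hc
        push_neg at hc
        exact hωne (by ext u v; simp [hc u])
      obtain ⟨b, hab⟩ : ∃ b, ω a b ≠ 0 := by
        by_contra hc
        push_neg at hc
        exact ha (by ext v; simp [hc v])
      -- a, b linearly independent
      have hli : LinearIndependent ℝ ![a, b] := by
        rw [LinearIndependent.pair_iff]
        intro s t hst
        have h1 : ω (s • a + t • b) b = 0 := by rw [hst]; simp
        have h2 : ω a (s • a + t • b) = 0 := by rw [hst]; simp
        simp only [map_add, map_smul, LinearMap.add_apply, LinearMap.smul_apply,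
          smul_eq_mul, hωalt] at h1 h2
        constructor
        · have : s * ω a b = 0 := by simpa using h1
          exact (mul_eq_zero.mp this).resolve_right hab
        · have : t * ω a b = 0 := by simpa using h2
          exact (mul_eq_zero.mp this).resolve_right hab
      have hcard : Fintype.card (Fin 2) = Module.finrank ℝ W := by simp [hW]
      let B := basisOfLinearIndependentOfCardEqFinrank hli hcard
      have hBx := B.sum_repr x
      have hB0 : B 0 = a := by simp [B, coe_basisOfLinearIndependentOfCardEqFinrank]
      have hB1 : B 1 = b := by simp [B, coe_basisOfLinearIndependentOfCardEqFinrank]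
      have hxab : x = B.repr x 0 • a + B.repr x 1 • b := by
        conv_lhs => rw [← hBx]
        rw [Fin.sum_univ_two, hB0, hB1]
      have e1 : ω x b = 0 := hx b
      have e2 : ω x a = 0 := hx a
      rw [hxab] at e1 e2
      simp only [map_add, map_smul, LinearMap.add_apply, LinearMap.smul_apply,
        smul_eq_mul, hωalt] at e1 e2
      have hc0 : B.repr x 0 = 0 := by
        have : B.repr x 0 * ω a b = 0 := by simpa using e1
        exact (mul_eq_zero.mp this).resolve_right hab
      have hc1 : B.repr x 1 = 0 := by
        have hba : ω b a = - ω a b := hωskew b a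
        have : B.repr x 1 * ω b a = 0 := by simpa using e2
        rw [hba] at this
        rcases mul_eq_zero.mp this with h' | h'
        · exact h'
        · exact absurd (neg_eq_zero.mp h') hab
      rw [hxab, hc0, hc1] at hxne
      simp at hxne
    -- A ξ = c • id
    have hAξ : A ξ = ((LinearMap.trace ℝ V (A ξ)) / (n : ℝ)) • (LinearMap.id : V →ₗ[ℝ] V) := by
      have h0 := hAt ξ
      rw [hAtξ] at h0
      exact (sub_eq_zero.mp h0.symm)
    -- gbar (ht X Y) ξ = 0
    have hht0 : ∀ X Y : V, gbar (ht X Y) ξ = 0 := by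
      intro X Y
      have hAX : (A ξ) X = ((LinearMap.trace ℝ V (A ξ)) / (n : ℝ)) • X := by
        conv_lhs => rw [hAξ]
        simp
      rw [hht, map_sub, LinearMap.sub_apply, map_smul, LinearMap.smul_apply, smul_eq_mul,
        hH, ← hAh, hAX, real_inner_smul_left]
      ring
    -- gbar G ξ = 0
    have hGξ : gbar G ξ = 0 := by
      have hA0ne : A0 ≠ 0 := by
        intro hc
        rw [hc] at hA0tr
        simp at hA0tr
        have hn2 : ((n : ℝ)) ^ 2 ≠ 0 := pow_ne_zero 2 (Nat.cast_ne_zero.mpr (by omega))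
        exact hn2 hA0tr.symm
      obtain ⟨X, hX⟩ : ∃ X, A0 X ≠ 0 := by
        by_contra hc
        push_neg at hc
        exact hA0ne (by ext v; simp [hc v])
      have := hht0 X (A0 X)
      rw [hrep, map_smul, LinearMap.smul_apply, smul_eq_mul] at this
      have hin : ⟪A0 X, A0 X⟫ ≠ 0 := by
        simpa using (inner_self_ne_zero (𝕜 := ℝ)).mpr hX
      exact (mul_eq_zero.mp this).resolve_left hin
    -- linear algebra in W
    set f : W →ₗ[ℝ] ℝ := gbar.flip G with hf
    have hfne : f ≠ 0 := by
      intro hc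
      apply hG
      apply hgnd
      intro η
      rw [hgsymm]
      have : f η = 0 := by rw [hc]; rfl
      simpa [hf] using this
    obtain ⟨w, hw⟩ : ∃ w, f w ≠ 0 := by
      by_contra hc
      push_neg at hc
      exact hfne (by ext v; simp [hc v])
    have hrtop : LinearMap.range f = ⊤ := by
      rw [eq_top_iff]
      rintro r -
      refine ⟨(r / f w) • w, ?_⟩
      rw [map_smul, smul_eq_mul]
      field_simp
    have hrange : Module.finrank ℝ (LinearMap.range f) = 1 := by
      rw [hrtop, finrank_top]
      simp
    have hker : Module.finrank ℝ (LinearMap.ker f) = 1 := by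
      have := LinearMap.finrank_range_add_finrank_ker f
      rw [hW, hrange] at this
      omega
    have hsdG : sd G ∈ LinearMap.ker f := by
      simp only [LinearMap.mem_ker, hf, LinearMap.flip_apply]
      rw [hsd, hωalt]
    have hξmem : ξ ∈ LinearMap.ker f := by
      simp only [LinearMap.mem_ker, hf, LinearMap.flip_apply]
      rw [← hgsymm]
      exact hGξ
    have hsdGne : sd G ≠ 0 := by
      intro hc
      apply hG
      apply hωnd
      intro y
      rw [← hsd, hc]
      simp
    have hv : (⟨sd G, hsdG⟩ : LinearMap.ker f) ≠ 0 := by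
      intro hc
      exact hsdGne (by simpa using congrArg Subtype.val hc)
    obtain ⟨c, hc⟩ := (finrank_eq_one_iff_of_nonzero' (⟨sd G, hsdG⟩ : LinearMap.ker f) hv).mp
      hker ⟨ξ, hξmem⟩
    exact ⟨c, by simpa using (congrArg Subtype.val hc).symm⟩
end

section
/- In the pointwise setting of a spacelike codimension-2 immersion, if the immersion is both pseudo-umbilical (Ã_H = 0) and ortho-umbilical (A_{⋆H} = 0), then either h̃ = 0 (the immersion is totally umbilical) or the mean curvature vector satisfies ḡ(H, H) = 0. -/
open scoped RealInnerProductSpace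

theorem stmt12
    {n : ℕ} (hn : 1 ≤ n)
    {V : Type*} [NormedAddCommGroup V] [InnerProductSpace ℝ V] [FiniteDimensional ℝ V]
    (hV : Module.finrank ℝ V = n)
    {W : Type*} [AddCommGroup W] [Module ℝ W] [FiniteDimensional ℝ W]
    (hW : Module.finrank ℝ W = 2)
    (gbar : W →ₗ[ℝ] W →ₗ[ℝ] ℝ)
    (hgsymm : ∀ ξ η : W, gbar ξ η = gbar η ξ)
    (hgnd : ∀ ξ : W, (∀ η : W, gbar ξ η = 0) → ξ = 0)
    (h : V →ₗ[ℝ] V →ₗ[ℝ] W) (hsymm : ∀ X Y : V, h X Y = h Y X)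
    (A : W →ₗ[ℝ] V →ₗ[ℝ] V)
    (hAsa : ∀ (ξ : W) (X Y : V), ⟪A ξ X, Y⟫ = ⟪X, A ξ Y⟫)
    (hAh : ∀ (ξ : W) (X Y : V), ⟪A ξ X, Y⟫ = gbar (h X Y) ξ)
    (H : W) (hH : ∀ ξ : W, gbar H ξ = (LinearMap.trace ℝ V (A ξ)) / (n : ℝ))
    (ht : V → V → W) (hht : ∀ X Y : V, ht X Y = h X Y - ⟪X, Y⟫ • H)
    (At : W → (V →ₗ[ℝ] V))
    (hAt : ∀ ξ : W, At ξ = A ξ - ((LinearMap.trace ℝ V (A ξ)) / (n : ℝ)) • (LinearMap.id : V →ₗ[ℝ] V))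
    (ω : W →ₗ[ℝ] W →ₗ[ℝ] ℝ) (hωalt : ∀ ξ : W, ω ξ ξ = 0) (hωne : ω ≠ 0)
    (sd : W → W) (hsd : ∀ ξ η : W, gbar (sd ξ) η = ω ξ η)
    (hpseudo : At H = 0) (hortho : A (sd H) = 0) :
    (∀ X Y : V, ht X Y = 0) ∨ gbar H H = 0 := by
  by_cases hHH : gbar H H = 0
  · exact Or.inr hHH
  left
  -- antisymmetry of ω
  have hωanti : ∀ ξ η : W, ω ξ η = -ω η ξ := by
    intro ξ η
    have := hωalt (ξ + η)
    simp only [map_add, LinearMap.add_apply, hωalt] at this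
    linarith
  have hHne : H ≠ 0 := by
    intro h0
    apply hHH
    rw [h0]; simp
  -- A H = gbar H H • id
  have hAH : A H = gbar H H • (LinearMap.id : V →ₗ[ℝ] V) := by
    have h1 := hAt H
    rw [hpseudo] at h1
    have h2 : A H = ((LinearMap.trace ℝ V (A H)) / (n : ℝ)) • (LinearMap.id : V →ₗ[ℝ] V) :=
      sub_eq_zero.mp h1.symm
    rw [h2, hH H]
  -- sd H ≠ 0
  have hsdne : sd H ≠ 0 := by
    intro h0
    have hωH : ∀ η : W, ω H η = 0 := by
      intro η
      rw [← hsd, h0]; simp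
    apply hωne
    ext ξ η
    simp only [LinearMap.zero_apply]
    have hωξH : ω ξ H = 0 := by rw [hωanti, hωH]; ring
    -- H, ξ, η are linearly dependent since finrank W = 2
    have hnli : ¬ LinearIndependent ℝ ![H, ξ, η] := by
      intro hli
      have := hli.fintype_card_le_finrank
      rw [hW] at this
      simp at this
    rw [Fintype.not_linearIndependent_iff] at hnli
    obtain ⟨g, hg, i, hi⟩ := hnli
    have hsum : g 0 • H + g 1 • ξ + g 2 • η = 0 := by
      simpa [Fin.sum_univ_three] using hg
    by_cases h2 : g 2 = 0
    · by_cases h1 : g 1 = 0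
      · exfalso
        have h0' : g 0 ≠ 0 := by
          fin_cases i
          · exact hi
          · exact absurd h1 hi
          · exact absurd h2 hi
        rw [h1, h2] at hsum
        simp at hsum
        rcases hsum with h' | h'
        · exact h0' h'
        · exact hHne h'
      · -- ξ is a multiple of H
        rw [h2] at hsum
        simp only [zero_smul, add_zero] at hsum
        have h' : g 1 • ξ = (-(g 0)) • H := by
          linear_combination (norm := module) hsum
        have h'' : (g 1)⁻¹ • (g 1 • ξ) = (g 1)⁻¹ • ((-(g 0)) • H) := by rw [h']
        rw [smul_smul, inv_mul_cancel₀ h1, one_smul, smul_smul] at h''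
        rw [h'']
        simp only [map_smul, LinearMap.smul_apply, smul_eq_mul, hωH, mul_zero]
    · -- η is a combination of H and ξ
      have h' : g 2 • η = (-(g 0)) • H + (-(g 1)) • ξ := by
        linear_combination (norm := module) hsum
      have h'' : (g 2)⁻¹ • (g 2 • η) = (g 2)⁻¹ • ((-(g 0)) • H + (-(g 1)) • ξ) := by rw [h']
      rw [smul_smul, inv_mul_cancel₀ h2, one_smul] at h''
      rw [h'', smul_add, smul_smul, smul_smul]
      simp only [map_add, map_smul, smul_eq_mul, hωH, hωalt,
        show (ω ξ) H = 0 from hωξH, mul_zero, add_zero]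
  -- H and sd H are linearly independent
  have hgsdH : gbar (sd H) H = 0 := by rw [hsd, hωalt]
  have hli : LinearIndependent ℝ ![H, sd H] := by
    rw [LinearIndependent.pair_iff]
    intro s t hst
    have h1 : gbar (s • H + t • sd H) H = 0 := by rw [hst]; simp
    simp only [map_add, map_smul, LinearMap.add_apply, LinearMap.smul_apply, smul_eq_mul,
      hgsdH] at h1
    have hs : s = 0 := by
      have : s * gbar H H = 0 := by linarith
      rcases mul_eq_zero.1 this with h' | h'
      · exact h'
      · exact absurd h' hHH
    constructor
    · exact hs
    · rw [hs] at hst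
      simp at hst
      rcases hst with h' | h'
      · exact h'
      · exact absurd h' hsdne
  -- they span W
  have hspan : Submodule.span ℝ (Set.range ![H, sd H]) = ⊤ := by
    apply hli.span_eq_top_of_card_eq_finrank
    simp [hW]
  -- main computation
  intro X Y
  set v : W := ht X Y with hv
  apply hgnd
  intro η
  have hvH : gbar v H = 0 := by
    rw [hv, hht]
    simp only [map_sub, map_smul, LinearMap.sub_apply, LinearMap.smul_apply, smul_eq_mul]
    have h1 : gbar (h X Y) H = gbar H H * ⟪X, Y⟫ := by
      rw [← hAh H X Y, hAH]
      simp [real_inner_smul_left]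
      all_goals ring
    rw [h1]
    ring
  have hvsd : gbar v (sd H) = 0 := by
    rw [hv, hht]
    simp only [map_sub, map_smul, LinearMap.sub_apply, LinearMap.smul_apply, smul_eq_mul]
    have h1 : gbar (h X Y) (sd H) = 0 := by
      rw [← hAh (sd H) X Y, hortho]
      simp
    have h2 : gbar H (sd H) = 0 := by rw [hgsymm, hgsdH]
    rw [h1, h2]
    ring
  have hη : η ∈ Submodule.span ℝ (Set.range ![H, sd H]) := by rw [hspan]; trivial
  rw [Submodule.mem_span_range_iff_exists_fun] at hη
  obtain ⟨c, hc⟩ := hη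
  rw [← hc]
  simp [Fin.sum_univ_two, hvH, hvsd]
end

section
/- In the pointwise setting of a spacelike codimension-2 immersion, assume the mean curvature vector H is nonzero. Then the immersion is ortho-umbilical (A_{⋆H} = 0) if and only if it is ξ-subgeodesic for some nonzero ξ ∈ W, i.e. there exist a nonzero ξ ∈ W and a symmetric bilinear form L : V × V → ℝ such that h(X,Y) = L(X,Y) · ξ for all X, Y ∈ V. -/
/-!
Since `ḡ(ξ, ⋆H) = ω(H, ξ)`, ortho-umbilicity says that every value of `h` is `ω`-orthogonal to
`H`; a nonzero alternating form on a plane is nondegenerate, so these values lie on the line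
`ℝ H`. Conversely, if `h = L • ξ` then `A_η = ḡ(ξ, η) • S` for one fixed operator `S`, so taking
traces gives `H = c • ξ`, whence `ḡ(ξ, ⋆H) = ω(H, ξ) = 0` and `A_{⋆H} = 0`.
-/

open scoped RealInnerProductSpace

open Submodule

theorem LinearMap.IsAlt.mem_span_singleton_of_apply_eq_zero {K W : Type*} [Field K]
    [AddCommGroup W] [Module K W] (hW : Module.finrank K W = 2) {ω : W →ₗ[K] W →ₗ[K] K}
    (hω : ω ≠ 0) (hωalt : ω.IsAlt) {x v : W} (hx : x ≠ 0) (hxv : ω x v = 0) : v ∈ K ∙ x := by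
  by_contra hv
  have hli : LinearIndependent K ![x, v] :=
    (LinearIndependent.pair_iff' hx).mpr fun a hax => hv (mem_span_singleton.mpr ⟨a, hax⟩)
  let b := basisOfLinearIndependentOfCardEqFinrank hli (by simp [hW])
  have hvx : ω v x = 0 := hωalt.eq_iff.mp hxv
  refine hω (LinearMap.ext_basis b b fun i j => ?_)
  fin_cases i <;> fin_cases j <;> simp [b, hωalt.self_eq_zero, hxv, hvx]

theorem LinearMap.exists_eq_smul_of_mem_span_singleton {K V W : Type*} [Field K]
    [AddCommGroup V] [Module K V] [AddCommGroup W] [Module K W] (h : V →ₗ[K] V →ₗ[K] W)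
    {ξ : W} (hξ : ξ ≠ 0) (hh : ∀ X Y, h X Y ∈ K ∙ ξ) :
    ∃ L : V →ₗ[K] V →ₗ[K] K, ∀ X Y, h X Y = L X Y • ξ := by
  obtain ⟨f, hf⟩ := Module.Projective.exists_dual_eq_one K hξ
  refine ⟨h.compr₂ f, fun X Y => ?_⟩
  obtain ⟨a, ha⟩ := mem_span_singleton.mp (hh X Y)
  simp [← ha, hf]

theorem LinearMap.eq_smul_of_inner_apply_eq_mul {V W : Type*} [NormedAddCommGroup V]
    [InnerProductSpace ℝ V] [AddCommGroup W] [Module ℝ W] {A : W →ₗ[ℝ] V →ₗ[ℝ] V}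
    {L : V →ₗ[ℝ] V →ₗ[ℝ] ℝ} {f : W →ₗ[ℝ] ℝ} (hA : ∀ η X Y, ⟪A η X, Y⟫ = L X Y * f η)
    {η₁ : W} (hη₁ : f η₁ = 1) (η : W) : A η = f η • A η₁ := by
  ext X
  refine ext_inner_right ℝ fun Y => ?_
  rw [LinearMap.smul_apply, real_inner_smul_left, hA, hA, hη₁, mul_one, mul_comm]

theorem stmt13_general
    {n : ℕ}
    {V : Type*} [NormedAddCommGroup V] [InnerProductSpace ℝ V]
    {W : Type*} [AddCommGroup W] [Module ℝ W]
    (hW : Module.finrank ℝ W = 2)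
    (gbar : W →ₗ[ℝ] W →ₗ[ℝ] ℝ)
    (hgsymm : ∀ ξ η : W, gbar ξ η = gbar η ξ)
    (hgnd : ∀ ξ : W, (∀ η : W, gbar ξ η = 0) → ξ = 0)
    (h : V →ₗ[ℝ] V →ₗ[ℝ] W) (hsymm : ∀ X Y : V, h X Y = h Y X)
    (A : W →ₗ[ℝ] V →ₗ[ℝ] V)
    (hAh : ∀ (ξ : W) (X Y : V), ⟪A ξ X, Y⟫ = gbar (h X Y) ξ)
    (H : W) (hH : ∀ ξ : W, gbar H ξ = (LinearMap.trace ℝ V (A ξ)) / (n : ℝ))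
    (ω : W →ₗ[ℝ] W →ₗ[ℝ] ℝ) (hωalt : ∀ ξ : W, ω ξ ξ = 0) (hωne : ω ≠ 0)
    (sd : W → W) (hsd : ∀ ξ η : W, gbar (sd ξ) η = ω ξ η)
    (hHne : H ≠ 0) :
    A (sd H) = 0 ↔
      ∃ ξ : W, ξ ≠ 0 ∧ ∃ L : V →ₗ[ℝ] V →ₗ[ℝ] ℝ,
        (∀ X Y : V, L X Y = L Y X) ∧ ∀ X Y : V, h X Y = L X Y • ξ := by
  have hg_sd : ∀ ξ, gbar ξ (sd H) = ω H ξ := fun ξ => by rw [hgsymm, hsd]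
  constructor
  · intro hA
    have hspan (X Y : V) : h X Y ∈ ℝ ∙ H := by
      refine LinearMap.IsAlt.mem_span_singleton_of_apply_eq_zero hW hωne hωalt hHne ?_
      rw [← hg_sd, ← hAh, hA, LinearMap.zero_apply, inner_zero_left]
    obtain ⟨L, hL⟩ := h.exists_eq_smul_of_mem_span_singleton hHne hspan
    exact ⟨H, hHne, L, fun X Y => smul_left_injective ℝ hHne (by simp only [← hL, hsymm]), hL⟩
  · rintro ⟨ξ, hξ, L, -, hL⟩
    obtain ⟨η₁, hη₁⟩ : ∃ η, gbar ξ η = 1 := by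
      obtain ⟨η₀, hη₀⟩ : ∃ η, gbar ξ η ≠ 0 := by
        by_contra! h0
        exact hξ (hgnd ξ h0)
      exact ⟨(gbar ξ η₀)⁻¹ • η₀, by simp [inv_mul_cancel₀ hη₀]⟩
    have hAL (η : W) (X Y : V) : ⟪A η X, Y⟫ = L X Y * gbar ξ η := by
      rw [hAh, hL, map_smul, LinearMap.smul_apply, smul_eq_mul]
    have hA := LinearMap.eq_smul_of_inner_apply_eq_mul hAL hη₁
    have hHξ : H = (LinearMap.trace ℝ V (A η₁) / n) • ξ := by
      refine sub_eq_zero.mp (hgnd _ fun η => ?_)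
      simp only [map_sub, LinearMap.sub_apply, hH, hA η, map_smul, LinearMap.smul_apply,
        smul_eq_mul]
      ring
    rw [hA, hg_sd, hHξ, map_smul, LinearMap.smul_apply, hωalt, smul_zero, zero_smul]

theorem stmt13
    {n : ℕ} (hn : 1 ≤ n)
    {V : Type*} [NormedAddCommGroup V] [InnerProductSpace ℝ V] [FiniteDimensional ℝ V]
    (hV : Module.finrank ℝ V = n)
    {W : Type*} [AddCommGroup W] [Module ℝ W] [FiniteDimensional ℝ W]
    (hW : Module.finrank ℝ W = 2)
    (gbar : W →ₗ[ℝ] W →ₗ[ℝ] ℝ)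
    (hgsymm : ∀ ξ η : W, gbar ξ η = gbar η ξ)
    (hgnd : ∀ ξ : W, (∀ η : W, gbar ξ η = 0) → ξ = 0)
    (h : V →ₗ[ℝ] V →ₗ[ℝ] W) (hsymm : ∀ X Y : V, h X Y = h Y X)
    (A : W →ₗ[ℝ] V →ₗ[ℝ] V)
    (hAsa : ∀ (ξ : W) (X Y : V), ⟪A ξ X, Y⟫ = ⟪X, A ξ Y⟫)
    (hAh : ∀ (ξ : W) (X Y : V), ⟪A ξ X, Y⟫ = gbar (h X Y) ξ)
    (H : W) (hH : ∀ ξ : W, gbar H ξ = (LinearMap.trace ℝ V (A ξ)) / (n : ℝ))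
    (ω : W →ₗ[ℝ] W →ₗ[ℝ] ℝ) (hωalt : ∀ ξ : W, ω ξ ξ = 0) (hωne : ω ≠ 0)
    (sd : W → W) (hsd : ∀ ξ η : W, gbar (sd ξ) η = ω ξ η)
    (hHne : H ≠ 0) :
    A (sd H) = 0 ↔
      ∃ ξ : W, ξ ≠ 0 ∧ ∃ L : V →ₗ[ℝ] V →ₗ[ℝ] ℝ,
        (∀ X Y : V, L X Y = L Y X) ∧ ∀ X Y : V, h X Y = L X Y • ξ :=
  stmt13_general hW gbar hgsymm hgnd h hsymm A hAh H hH ω hωalt hωne sd hsd hHne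
end

section
/- In the pointwise setting of a spacelike codimension-2 immersion, assume the mean curvature vector H is nonzero. Then there exists a nonzero ξ ∈ W with A_{⋆ξ} = 0 if and only if the immersion is ortho-umbilical, i.e. A_{⋆H} = 0. -/
open scoped RealInnerProductSpace

set_option maxHeartbeats 1600000 in
theorem stmt14
    {n : ℕ} (hn : 1 ≤ n)
    {V : Type*} [NormedAddCommGroup V] [InnerProductSpace ℝ V] [FiniteDimensional ℝ V]
    (hV : Module.finrank ℝ V = n)
    {W : Type*} [AddCommGroup W] [Module ℝ W] [FiniteDimensional ℝ W]
    (hW : Module.finrank ℝ W = 2)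
    (gbar : W →ₗ[ℝ] W →ₗ[ℝ] ℝ)
    (hgsymm : ∀ ξ η : W, gbar ξ η = gbar η ξ)
    (hgnd : ∀ ξ : W, (∀ η : W, gbar ξ η = 0) → ξ = 0)
    (h : V →ₗ[ℝ] V →ₗ[ℝ] W) (hsymm : ∀ X Y : V, h X Y = h Y X)
    (A : W →ₗ[ℝ] V →ₗ[ℝ] V)
    (hAsa : ∀ (ξ : W) (X Y : V), ⟪A ξ X, Y⟫ = ⟪X, A ξ Y⟫)
    (hAh : ∀ (ξ : W) (X Y : V), ⟪A ξ X, Y⟫ = gbar (h X Y) ξ)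
    (H : W) (hH : ∀ ξ : W, gbar H ξ = (LinearMap.trace ℝ V (A ξ)) / (n : ℝ))
    (ω : W →ₗ[ℝ] W →ₗ[ℝ] ℝ) (hωalt : ∀ ξ : W, ω ξ ξ = 0) (hωne : ω ≠ 0)
    (sd : W → W) (hsd : ∀ ξ η : W, gbar (sd ξ) η = ω ξ η)
    (hHne : H ≠ 0) :
    (∃ ξ : W, ξ ≠ 0 ∧ A (sd ξ) = 0) ↔ A (sd H) = 0 := by
  constructor
  · rintro ⟨ξ, hξ0, hAξ⟩
    -- skew symmetry of ω
    have skew : ∀ a b : W, ω a b = -ω b a := by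
      intro a b
      have h0 := hωalt (a + b)
      simp only [map_add, LinearMap.add_apply, hωalt a, hωalt b] at h0
      linarith
    -- linear independence of pairs with ω a b ≠ 0
    have hpair : ∀ x y : W, ω x y ≠ 0 → LinearIndependent ℝ ![x, y] := by
      intro x y hxy
      rw [LinearIndependent.pair_iff]
      intro s t hst
      have h1 : ω (s • x + t • y) y = 0 := by rw [hst]; simp
      have h2 : ω x (s • x + t • y) = 0 := by rw [hst]; simp
      simp only [map_add, map_smul, LinearMap.add_apply, LinearMap.smul_apply,
        smul_eq_mul, hωalt, mul_zero, add_zero, zero_add] at h1 h2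
      constructor
      · rcases mul_eq_zero.1 h1 with h1 | h1
        · exact h1
        · exact absurd h1 hxy
      · rcases mul_eq_zero.1 h2 with h2 | h2
        · exact h2
        · exact absurd h2 hxy
    -- ω ξ H = 0 since A (sd ξ) = 0
    have hωξH : ω ξ H = 0 := by
      rw [← hsd, hgsymm, hH, hAξ]
      simp
    -- ω ξ ≠ 0 : there is η with ω ξ η ≠ 0
    obtain ⟨η, hη⟩ : ∃ η : W, ω ξ η ≠ 0 := by
      by_contra hc
      push_neg at hc
      obtain ⟨a, b, hab⟩ : ∃ a b : W, ω a b ≠ 0 := by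
        by_contra hc2
        push_neg at hc2
        exact hωne (by ext a b; simp [hc2])
      let B := basisOfLinearIndependentOfCardEqFinrank (hpair a b hab)
        (by simp [hW])
      have hBcoe : ⇑B = ![a, b] := coe_basisOfLinearIndependentOfCardEqFinrank _ _
      have hrepr := B.sum_repr ξ
      rw [Fin.sum_univ_two, hBcoe] at hrepr
      simp only [Matrix.cons_val_zero, Matrix.cons_val_one, Matrix.head_cons] at hrepr
      set s := B.repr ξ 0
      set t := B.repr ξ 1
      have h1 : ω ξ b = 0 := hc b
      have h2 : ω ξ a = 0 := hc a
      rw [← hrepr] at h1 h2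
      simp only [map_add, map_smul, LinearMap.add_apply, LinearMap.smul_apply,
        smul_eq_mul, hωalt, mul_zero, add_zero, zero_add] at h1 h2
      have hba : ω b a = -ω a b := by rw [skew b a]
      rw [hba] at h2
      have hs : s = 0 := by
        rcases mul_eq_zero.1 h1 with h' | h'
        · exact h'
        · exact absurd h' hab
      have ht : t = 0 := by
        have : t * ω a b = 0 := by linarith [h2]
        rcases mul_eq_zero.1 this with h' | h'
        · exact h'
        · exact absurd h' hab
      apply hξ0
      rw [← hrepr, hs, ht]
      simp
    -- basis from ξ, η
    let C := basisOfLinearIndependentOfCardEqFinrank (hpair ξ η hη) (by simp [hW])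
    have hCcoe : ⇑C = ![ξ, η] := coe_basisOfLinearIndependentOfCardEqFinrank _ _
    have hrepr := C.sum_repr H
    rw [Fin.sum_univ_two, hCcoe] at hrepr
    simp only [Matrix.cons_val_zero, Matrix.cons_val_one, Matrix.head_cons] at hrepr
    set c := C.repr H 0
    set t := C.repr H 1
    have h1 : ω ξ H = c * ω ξ ξ + t * ω ξ η := by
      rw [← hrepr]; simp [map_add, map_smul]
    rw [hωξH, hωalt, mul_zero, zero_add] at h1
    have ht : t = 0 := by
      rcases mul_eq_zero.1 h1.symm with h' | h'
      · exact h'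
      · exact absurd h' hη
    have hHc : H = c • ξ := by rw [← hrepr, ht]; simp
    -- sd H = c • sd ξ
    have hsdH : sd H = c • sd ξ := by
      have : ∀ η' : W, gbar (sd H - c • sd ξ) η' = 0 := by
        intro η'
        simp only [map_sub, map_smul, LinearMap.sub_apply, LinearMap.smul_apply,
          smul_eq_mul, hsd]
        rw [hHc]
        simp [map_smul]
      have := hgnd _ this
      rwa [sub_eq_zero] at this
    rw [hsdH, map_smul, hAξ, smul_zero]
  · intro hA
    exact ⟨H, hHne, hA⟩
end

section
/- In the pointwise setting of a spacelike codimension-2 immersion, assume the mean curvature vector H is nonzero. Then the immersion is ortho-umbilical (A_{⋆H} = 0) if and only if for all X, Y ∈ V the vectors h(X,Y) and H are linearly dependent in W (i.e. h(X,Y)♭ ∧ H♭ = 0 for all X, Y). -/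
open scoped RealInnerProductSpace

theorem stmt15
    {n : ℕ} (hn : 1 ≤ n)
    {V : Type*} [NormedAddCommGroup V] [InnerProductSpace ℝ V] [FiniteDimensional ℝ V]
    (hV : Module.finrank ℝ V = n)
    {W : Type*} [AddCommGroup W] [Module ℝ W] [FiniteDimensional ℝ W]
    (hW : Module.finrank ℝ W = 2)
    (gbar : W →ₗ[ℝ] W →ₗ[ℝ] ℝ)
    (hgsymm : ∀ ξ η : W, gbar ξ η = gbar η ξ)
    (hgnd : ∀ ξ : W, (∀ η : W, gbar ξ η = 0) → ξ = 0)
    (h : V →ₗ[ℝ] V →ₗ[ℝ] W) (hsymm : ∀ X Y : V, h X Y = h Y X)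
    (A : W →ₗ[ℝ] V →ₗ[ℝ] V)
    (hAsa : ∀ (ξ : W) (X Y : V), ⟪A ξ X, Y⟫ = ⟪X, A ξ Y⟫)
    (hAh : ∀ (ξ : W) (X Y : V), ⟪A ξ X, Y⟫ = gbar (h X Y) ξ)
    (H : W) (hH : ∀ ξ : W, gbar H ξ = (LinearMap.trace ℝ V (A ξ)) / (n : ℝ))
    (ω : W →ₗ[ℝ] W →ₗ[ℝ] ℝ) (hωalt : ∀ ξ : W, ω ξ ξ = 0) (hωne : ω ≠ 0)
    (sd : W → W) (hsd : ∀ ξ η : W, gbar (sd ξ) η = ω ξ η)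
    (hHne : H ≠ 0) :
    A (sd H) = 0 ↔
      ∀ X Y : V, ∃ a b : ℝ, (a ≠ 0 ∨ b ≠ 0) ∧ a • h X Y + b • H = 0 := by
  have hskew : ∀ ξ η : W, ω ξ η = - ω η ξ := by
    intro ξ η
    have h0 := hωalt (ξ + η)
    simp only [map_add, LinearMap.add_apply, hωalt] at h0
    linarith
  constructor
  · intro hA X Y
    have key : ω H (h X Y) = 0 := by
      have h1 := hAh (sd H) X Y
      rw [hA] at h1
      simp only [LinearMap.zero_apply, inner_zero_left] at h1
      rw [hgsymm, hsd] at h1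
      exact h1.symm
    by_cases hli : LinearIndependent ℝ ![h X Y, H]
    · exfalso
      have hcard : Fintype.card (Fin 2) = Module.finrank ℝ W := by simp [hW]
      let b := basisOfLinearIndependentOfCardEqFinrank hli hcard
      have hb : ∀ i, b i = ![h X Y, H] i := fun i => by
        simp [b, coe_basisOfLinearIndependentOfCardEqFinrank]
      apply hωne
      apply b.ext
      intro i
      apply b.ext
      intro j
      rw [hb, hb]
      have key' : ω (h X Y) H = 0 := by rw [hskew, key, neg_zero]
      fin_cases i <;> fin_cases j <;>
        simp [hωalt, key, key']
    · rw [LinearIndependent.pair_iff] at hli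
      push_neg at hli
      obtain ⟨a, c, hab, hne⟩ := hli
      exact ⟨a, c, by tauto, hab⟩
  · intro hdep
    have hg0 : gbar H (sd H) = 0 := by
      rw [hgsymm, hsd]; exact hωalt H
    ext X
    have hz : ∀ Y : V, ⟪A (sd H) X, Y⟫ = 0 := by
      intro Y
      rw [hAh]
      obtain ⟨a, c, hab, heq⟩ := hdep X Y
      have ha : a ≠ 0 := by
        rcases hab with ha | hc
        · exact ha
        · intro ha0
          rw [ha0, zero_smul, zero_add] at heq
          exact hHne ((smul_eq_zero.mp heq).resolve_left hc)
      have h1 : a • h X Y = -(c • H) := eq_neg_of_add_eq_zero_left heq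
      have h2 : a * gbar (h X Y) (sd H) = 0 := by
        have : gbar (a • h X Y) (sd H) = gbar (-(c • H)) (sd H) := by rw [h1]
        simpa [hg0] using this
      exact (mul_eq_zero.mp h2).resolve_left ha
    have := hz (A (sd H) X)
    rw [inner_self_eq_zero] at this
    simpa using this
end

section
/- In the Lorentzian pointwise setting of a spacelike codimension-2 immersion with null basis {k, ℓ} of W, define 𝓑 = −(A_k ∘ A_ℓ + A_ℓ ∘ A_k) and 𝓙 = −(Ã_k ∘ Ã_ℓ + Ã_ℓ ∘ Ã_k), and fix the Hodge dual ⋆ via the alternating form ω normalized by ω(k, ℓ) = 1. Assume H ≠ 0 and that the immersion is not totally umbilical (h̃ ≠ 0). Then the following three conditions are equivalent: (1) 𝓑 − 𝓙 = 0; (2) Ã_H = 0 and A_{⋆H} = 0 (the immersion is both pseudo-umbilical and ortho-umbilical); (3) 𝓑 = 0 and 𝓙 = 0. Moreover, if any of them holds, then ḡ(H, H) = 0. -/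
/-!
Write `a = ḡ(H, k)`, `b = ḡ(H, ℓ)`, `P = A_k`, `Q = A_ℓ`, so that `tr P = n a`, `tr Q = n b`,
`H = -b k - a ℓ`, `⋆H = b k - a ℓ` and `ḡ(H, H) = -2ab`. Then
`𝓑 - 𝓙 = -2b P - 2a Q + 2ab`, `Ã_H = -b P - a Q + 2ab` and `A_{⋆H} = b P - a Q`.
Each of the three conditions is equivalent to `P = 0 ∨ Q = 0`: for `𝓑 - 𝓙 = 0` the trace
gives `ab = 0`, and `H ≠ 0` rules out `a = b = 0`; for condition (2), sum and difference give
`a (Q - b) = 0` and `b (P - a) = 0`, and non-umbilicity rules out `P = a ∧ Q = b`.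
Finally `P = 0` forces `a = 0` (and `Q = 0` forces `b = 0`), so `𝓑 = 0` and `ḡ(H, H) = 0`.
-/

open scoped RealInnerProductSpace
open Module

section NullBasis

variable {W : Type*} [AddCommGroup W] [Module ℝ W] {g : W →ₗ[ℝ] W →ₗ[ℝ] ℝ} {k ℓ : W}

lemma linearIndependent_of_null_pair (hkk : g k k = 0) (hll : g ℓ ℓ = 0) (hkl : g k ℓ = -1) :
    LinearIndependent ℝ ![k, ℓ] := by
  refine LinearIndependent.pair_iff.mpr fun s t hst => ?_
  have hℓ := congrArg (g · ℓ) hst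
  have hk := congrArg (g k) hst
  simp only [map_add, map_smul, LinearMap.add_apply, LinearMap.smul_apply, smul_eq_mul,
    map_zero, LinearMap.zero_apply, hkk, hll, hkl] at hℓ hk
  constructor <;> linarith

lemma eq_sub_of_null_pair (hW : finrank ℝ W = 2) (hkk : g k k = 0) (hll : g ℓ ℓ = 0)
    (hkl : g k ℓ = -1) (ξ : W) : ξ = -g ξ ℓ • k - g k ξ • ℓ := by
  have hspan : Submodule.span ℝ {k, ℓ} = ⊤ := by
    simpa [Matrix.range_cons, Set.pair_comm] using
      (linearIndependent_of_null_pair hkk hll hkl).span_eq_top_of_card_eq_finrank (by simp [hW])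
  obtain ⟨c, d, rfl⟩ := Submodule.mem_span_pair.mp (hspan ▸ Submodule.mem_top (x := ξ))
  simp [hkk, hll, hkl]

lemma eq_zero_of_null_pair (hW : finrank ℝ W = 2) (hkk : g k k = 0) (hll : g ℓ ℓ = 0)
    (hkl : g k ℓ = -1) {ξ : W} (hℓ : g ξ ℓ = 0) (hk : g k ξ = 0) : ξ = 0 := by
  simpa [hℓ, hk] using eq_sub_of_null_pair hW hkk hll hkl ξ

lemma hodge_eq_of_null_pair (hW : finrank ℝ W = 2) (hkk : g k k = 0) (hll : g ℓ ℓ = 0)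
    (hkl : g k ℓ = -1) (hg : ∀ ξ η, g ξ η = g η ξ) {ω : W →ₗ[ℝ] W →ₗ[ℝ] ℝ} (hω : ω.IsAlt)
    (hωkl : ω k ℓ = 1) {sd : W → W} (hsd : ∀ ξ η, g (sd ξ) η = ω ξ η) (ξ : W) :
    sd ξ = g ξ ℓ • k - g ξ k • ℓ := by
  have hωlk : ω ℓ k = -1 := by rw [← hω.neg, hωkl]
  have hξ := eq_sub_of_null_pair hW hkk hll hkl ξ
  have hωℓ : ω ξ ℓ = -g ξ ℓ := by
    conv_lhs => rw [hξ]
    simp [hω.self_eq_zero, hωkl]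
  have hωk : ω ξ k = g ξ k := by
    conv_lhs => rw [hξ]
    simp [hω.self_eq_zero, hωlk, hg k ξ]
  rw [eq_sub_of_null_pair hW hkk hll hkl (sd ξ), hsd, hg k, hsd, hωℓ, hωk, neg_neg]

lemma apply_self_eq_of_null_pair (hW : finrank ℝ W = 2) (hkk : g k k = 0) (hll : g ℓ ℓ = 0)
    (hkl : g k ℓ = -1) (hg : ∀ ξ η, g ξ η = g η ξ) (ξ : W) :
    g ξ ξ = -(2 * (g ξ k * g ξ ℓ)) := by
  nth_rewrite 2 [eq_sub_of_null_pair hW hkk hll hkl ξ]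
  simp only [map_sub, map_smul, smul_eq_mul, hg ξ k]
  ring

end NullBasis

section ShapeOperators

variable {V : Type*} [AddCommGroup V] [Module ℝ V]

lemma anticomm_sub_anticomm_sub_smul_id (P Q : V →ₗ[ℝ] V) (a b : ℝ) :
    -(P ∘ₗ Q + Q ∘ₗ P) - -((P - a • LinearMap.id) ∘ₗ (Q - b • LinearMap.id) +
      (Q - b • LinearMap.id) ∘ₗ (P - a • LinearMap.id)) =
      -(2 * b) • P - (2 * a) • Q + (2 * (a * b)) • LinearMap.id := by
  simp only [LinearMap.sub_comp, LinearMap.comp_sub, LinearMap.smul_comp, LinearMap.comp_smul,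
    LinearMap.id_comp, LinearMap.comp_id]
  module

variable {P Q : V →ₗ[ℝ] V} {a b : ℝ}

lemma eq_zero_of_trace_eq_finrank_mul (hV : finrank ℝ V ≠ 0)
    (hP : LinearMap.trace ℝ V P = finrank ℝ V * a) (h : P = 0) : a = 0 := by
  simpa [h, hV] using hP.symm

lemma neg_smul_sub_smul_add_smul_id_eq_zero_and_smul_sub_smul_eq_zero_iff (hV : finrank ℝ V ≠ 0)
    (hP : LinearMap.trace ℝ V P = finrank ℝ V * a) (hQ : LinearMap.trace ℝ V Q = finrank ℝ V * b)
    (hab : a ≠ 0 ∨ b ≠ 0) (hPQ : ¬(P = a • LinearMap.id ∧ Q = b • LinearMap.id)) :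
    (-b • P - a • Q + (2 * (a * b)) • LinearMap.id = 0 ∧ b • P - a • Q = 0) ↔ P = 0 ∨ Q = 0 := by
  constructor
  · rintro ⟨hsum, hdiff⟩
    have hP' : b • (P - a • LinearMap.id) = 0 := by
      linear_combination (norm := module) (-(1 / 2) : ℝ) • (hsum - hdiff)
    have hQ' : a • (Q - b • LinearMap.id) = 0 := by
      linear_combination (norm := module) (-(1 / 2) : ℝ) • (hsum + hdiff)
    by_cases ha : a = 0
    · have hb : b ≠ 0 := by tauto
      left
      simpa [ha, hb, sub_eq_zero] using hP'
    · have hQb : Q = b • LinearMap.id := by simpa [ha, sub_eq_zero] using hQ'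
      by_cases hb : b = 0
      · right
        simpa [hb] using hQb
      · exact (hPQ ⟨by simpa [hb, sub_eq_zero] using hP', hQb⟩).elim
  · rintro (h | h)
    · simp [h, eq_zero_of_trace_eq_finrank_mul hV hP h]
    · simp [h, eq_zero_of_trace_eq_finrank_mul hV hQ h]

variable [FiniteDimensional ℝ V]

lemma smul_sub_smul_add_smul_id_eq_zero_iff (hV : finrank ℝ V ≠ 0)
    (hP : LinearMap.trace ℝ V P = finrank ℝ V * a) (hQ : LinearMap.trace ℝ V Q = finrank ℝ V * b)
    (hab : a ≠ 0 ∨ b ≠ 0) :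
    -(2 * b) • P - (2 * a) • Q + (2 * (a * b)) • LinearMap.id = 0 ↔ P = 0 ∨ Q = 0 := by
  constructor
  · intro h
    have htr := congrArg (LinearMap.trace ℝ V) h
    simp only [map_add, map_sub, map_smul, LinearMap.trace_id, hP, hQ, smul_eq_mul,
      map_zero] at htr
    have hab0 : a * b = 0 := by
      have hn : (finrank ℝ V : ℝ) ≠ 0 := by exact_mod_cast hV
      have : -2 * (a * b) * finrank ℝ V = 0 := by linear_combination htr
      simpa [hn] using this
    rcases mul_eq_zero.mp hab0 with ha | hb
    · left
      have hb : b ≠ 0 := by tauto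
      have : (-(2 * b)) • P = 0 := by simpa [ha] using h
      simpa [hb] using this
    · right
      have ha : a ≠ 0 := by tauto
      have : (-(2 * a)) • Q = 0 := by simpa [hb] using h
      simpa [ha] using this
  · rintro (h | h)
    · simp [h, eq_zero_of_trace_eq_finrank_mul hV hP h]
    · simp [h, eq_zero_of_trace_eq_finrank_mul hV hQ h]

end ShapeOperators

lemma inner_sub_smul_id_apply_eq {V W : Type*} [NormedAddCommGroup V] [InnerProductSpace ℝ V]
    [AddCommGroup W] [Module ℝ W] {g : W →ₗ[ℝ] W →ₗ[ℝ] ℝ} {h : V →ₗ[ℝ] V →ₗ[ℝ] W}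
    {A : W →ₗ[ℝ] V →ₗ[ℝ] V} (hAh : ∀ (ξ : W) (X Y : V), ⟪A ξ X, Y⟫ = g (h X Y) ξ)
    (H ξ : W) (X Y : V) :
    ⟪(A ξ - g H ξ • (LinearMap.id : V →ₗ[ℝ] V)) X, Y⟫ = g (h X Y - ⟪X, Y⟫ • H) ξ := by
  simp [inner_sub_left, real_inner_smul_left, hAh, mul_comm]

lemma shear_eq_zero_of_null_pair {V W : Type*} [NormedAddCommGroup V] [InnerProductSpace ℝ V]
    [AddCommGroup W] [Module ℝ W] {g : W →ₗ[ℝ] W →ₗ[ℝ] ℝ} {h : V →ₗ[ℝ] V →ₗ[ℝ] W}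
    {A : W →ₗ[ℝ] V →ₗ[ℝ] V} (hAh : ∀ (ξ : W) (X Y : V), ⟪A ξ X, Y⟫ = g (h X Y) ξ) {k ℓ : W}
    (hW : finrank ℝ W = 2) (hkk : g k k = 0) (hll : g ℓ ℓ = 0) (hkl : g k ℓ = -1)
    (hg : ∀ ξ η, g ξ η = g η ξ) {H : W} (hk : A k = g H k • LinearMap.id)
    (hl : A ℓ = g H ℓ • LinearMap.id) (X Y : V) : h X Y - ⟪X, Y⟫ • H = 0 := by
  refine eq_zero_of_null_pair hW hkk hll hkl ?_ ?_
  · rw [← inner_sub_smul_id_apply_eq hAh, hl, sub_self, LinearMap.zero_apply, inner_zero_left]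
  · rw [hg, ← inner_sub_smul_id_apply_eq hAh, hk, sub_self, LinearMap.zero_apply, inner_zero_left]

theorem stmt18_general
    {n : ℕ} (hn : 1 ≤ n)
    {V : Type*} [NormedAddCommGroup V] [InnerProductSpace ℝ V] [FiniteDimensional ℝ V]
    (hV : Module.finrank ℝ V = n)
    {W : Type*} [AddCommGroup W] [Module ℝ W] [FiniteDimensional ℝ W]
    (hW : Module.finrank ℝ W = 2)
    (gbar : W →ₗ[ℝ] W →ₗ[ℝ] ℝ)
    (hgsymm : ∀ ξ η : W, gbar ξ η = gbar η ξ)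
    (h : V →ₗ[ℝ] V →ₗ[ℝ] W)
    (A : W →ₗ[ℝ] V →ₗ[ℝ] V)
    (hAh : ∀ (ξ : W) (X Y : V), ⟪A ξ X, Y⟫ = gbar (h X Y) ξ)
    (H : W) (hH : ∀ ξ : W, gbar H ξ = (LinearMap.trace ℝ V (A ξ)) / (n : ℝ))
    (ht : V → V → W) (hht : ∀ X Y : V, ht X Y = h X Y - ⟪X, Y⟫ • H)
    (At : W → (V →ₗ[ℝ] V))
    (hAt : ∀ ξ : W, At ξ = A ξ - ((LinearMap.trace ℝ V (A ξ)) / (n : ℝ)) • (LinearMap.id : V →ₗ[ℝ] V))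
    (k ℓ : W) (hkk : gbar k k = 0) (hll : gbar ℓ ℓ = 0) (hkl : gbar k ℓ = -1)
    (ω : W →ₗ[ℝ] W →ₗ[ℝ] ℝ) (hωalt : ∀ ξ : W, ω ξ ξ = 0) (hωkl : ω k ℓ = 1)
    (sd : W → W) (hsd : ∀ ξ η : W, gbar (sd ξ) η = ω ξ η)
    (B J : V →ₗ[ℝ] V)
    (hB : B = -(A k ∘ₗ A ℓ + A ℓ ∘ₗ A k))
    (hJ : J = -(At k ∘ₗ At ℓ + At ℓ ∘ₗ At k))
    (hHne : H ≠ 0) (htne : ¬ ∀ X Y : V, ht X Y = 0) :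
    (B - J = 0 ↔ (At H = 0 ∧ A (sd H) = 0)) ∧
      ((At H = 0 ∧ A (sd H) = 0) ↔ (B = 0 ∧ J = 0)) ∧
      (B - J = 0 → gbar H H = 0) := by
  have hV0 : Module.finrank ℝ V ≠ 0 := by omega
  have htr : ∀ ξ, LinearMap.trace ℝ V (A ξ) = Module.finrank ℝ V * gbar H ξ := fun ξ => by
    rw [hH, hV, mul_div_cancel₀ _ (Nat.cast_ne_zero.mpr (by omega))]
  set a := gbar H k
  set b := gbar H ℓ
  have hab : a ≠ 0 ∨ b ≠ 0 := by
    by_contra! hab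
    exact hHne (eq_zero_of_null_pair hW hkk hll hkl hab.2 (by rw [hgsymm]; exact hab.1))
  have hgHH : gbar H H = -(2 * (a * b)) := apply_self_eq_of_null_pair hW hkk hll hkl hgsymm H
  have hAtH : At H = -b • A k - a • A ℓ + (2 * (a * b)) • LinearMap.id := by
    rw [hAt, ← hH, hgHH, eq_sub_of_null_pair hW hkk hll hkl H, hgsymm k H]
    simp only [map_sub, map_smul]
    module
  have hAsdH : A (sd H) = b • A k - a • A ℓ := by
    rw [hodge_eq_of_null_pair hW hkk hll hkl hgsymm hωalt hωkl hsd H, map_sub, map_smul, map_smul]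
  have h1 : B - J = 0 ↔ A k = 0 ∨ A ℓ = 0 := by
    rw [hB, hJ, hAt, hAt, ← hH, ← hH, anticomm_sub_anticomm_sub_smul_id]
    exact smul_sub_smul_add_smul_id_eq_zero_iff hV0 (htr k) (htr ℓ) hab
  have h2 : (At H = 0 ∧ A (sd H) = 0) ↔ A k = 0 ∨ A ℓ = 0 := by
    rw [hAtH, hAsdH]
    exact neg_smul_sub_smul_add_smul_id_eq_zero_and_smul_sub_smul_eq_zero_iff hV0 (htr k) (htr ℓ)
      hab fun ⟨hk, hl⟩ => htne fun X Y => (hht X Y).trans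
        (shear_eq_zero_of_null_pair hAh hW hkk hll hkl hgsymm hk hl X Y)
  have hB0 : A k = 0 ∨ A ℓ = 0 → B = 0 := by rintro (h | h) <;> simp [hB, h]
  refine ⟨h1.trans h2.symm, h2.trans ⟨fun h => ⟨hB0 h, ?_⟩, fun h => h1.mp (by simp [h])⟩,
    fun h => ?_⟩
  · simpa [hB0 h] using h1.mpr h
  · obtain h | h := h1.mp h
    · simp [hgHH, show a = 0 from eq_zero_of_trace_eq_finrank_mul hV0 (htr k) h]
    · simp [hgHH, show b = 0 from eq_zero_of_trace_eq_finrank_mul hV0 (htr ℓ) h]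

theorem stmt18
    {n : ℕ} (hn : 1 ≤ n)
    {V : Type*} [NormedAddCommGroup V] [InnerProductSpace ℝ V] [FiniteDimensional ℝ V]
    (hV : Module.finrank ℝ V = n)
    {W : Type*} [AddCommGroup W] [Module ℝ W] [FiniteDimensional ℝ W]
    (hW : Module.finrank ℝ W = 2)
    (gbar : W →ₗ[ℝ] W →ₗ[ℝ] ℝ)
    (hgsymm : ∀ ξ η : W, gbar ξ η = gbar η ξ)
    (hgnd : ∀ ξ : W, (∀ η : W, gbar ξ η = 0) → ξ = 0)
    (h : V →ₗ[ℝ] V →ₗ[ℝ] W) (hsymm : ∀ X Y : V, h X Y = h Y X)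
    (A : W →ₗ[ℝ] V →ₗ[ℝ] V)
    (hAsa : ∀ (ξ : W) (X Y : V), ⟪A ξ X, Y⟫ = ⟪X, A ξ Y⟫)
    (hAh : ∀ (ξ : W) (X Y : V), ⟪A ξ X, Y⟫ = gbar (h X Y) ξ)
    (H : W) (hH : ∀ ξ : W, gbar H ξ = (LinearMap.trace ℝ V (A ξ)) / (n : ℝ))
    (ht : V → V → W) (hht : ∀ X Y : V, ht X Y = h X Y - ⟪X, Y⟫ • H)
    (At : W → (V →ₗ[ℝ] V))
    (hAt : ∀ ξ : W, At ξ = A ξ - ((LinearMap.trace ℝ V (A ξ)) / (n : ℝ)) • (LinearMap.id : V →ₗ[ℝ] V))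
    (k ℓ : W) (hkk : gbar k k = 0) (hll : gbar ℓ ℓ = 0) (hkl : gbar k ℓ = -1)
    (ω : W →ₗ[ℝ] W →ₗ[ℝ] ℝ) (hωalt : ∀ ξ : W, ω ξ ξ = 0) (hωkl : ω k ℓ = 1)
    (sd : W → W) (hsd : ∀ ξ η : W, gbar (sd ξ) η = ω ξ η)
    (B J : V →ₗ[ℝ] V)
    (hB : B = -(A k ∘ₗ A ℓ + A ℓ ∘ₗ A k))
    (hJ : J = -(At k ∘ₗ At ℓ + At ℓ ∘ₗ At k))
    (hHne : H ≠ 0) (htne : ¬ ∀ X Y : V, ht X Y = 0) :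
    (B - J = 0 ↔ (At H = 0 ∧ A (sd H) = 0)) ∧
      ((At H = 0 ∧ A (sd H) = 0) ↔ (B = 0 ∧ J = 0)) ∧
      (B - J = 0 → gbar H H = 0) :=
  stmt18_general hn hV hW gbar hgsymm h A hAh H hH ht hht At hAt k ℓ hkk hll hkl ω hωalt hωkl sd hsd
    B J hB hJ hHne htne
end

section
/- In the pointwise setting of a spacelike codimension-2 immersion, suppose h̃(X,Y) = ⟨Ã₀ X, Y⟩ · G for all X, Y ∈ V, where Ã₀ : V → V is self-adjoint with tr(Ã₀ ∘ Ã₀) = n² and G ∈ W. Then the shear Casorati operator satisfies 𝓙 = ḡ(G,G) · (Ã₀ ∘ Ã₀), and in particular tr(𝓙) = n² · ḡ(G,G). (This holds for any ḡ-orthonormal basis of W used to define 𝓙.) -/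
open scoped RealInnerProductSpace

theorem stmt19
    {n : ℕ} (hn : 1 ≤ n)
    {V : Type*} [NormedAddCommGroup V] [InnerProductSpace ℝ V] [FiniteDimensional ℝ V]
    (hV : Module.finrank ℝ V = n)
    {W : Type*} [AddCommGroup W] [Module ℝ W] [FiniteDimensional ℝ W]
    (hW : Module.finrank ℝ W = 2)
    (gbar : W →ₗ[ℝ] W →ₗ[ℝ] ℝ)
    (hgsymm : ∀ ξ η : W, gbar ξ η = gbar η ξ)
    (hgnd : ∀ ξ : W, (∀ η : W, gbar ξ η = 0) → ξ = 0)
    (h : V →ₗ[ℝ] V →ₗ[ℝ] W) (hsymm : ∀ X Y : V, h X Y = h Y X)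
    (A : W →ₗ[ℝ] V →ₗ[ℝ] V)
    (hAsa : ∀ (ξ : W) (X Y : V), ⟪A ξ X, Y⟫ = ⟪X, A ξ Y⟫)
    (hAh : ∀ (ξ : W) (X Y : V), ⟪A ξ X, Y⟫ = gbar (h X Y) ξ)
    (H : W) (hH : ∀ ξ : W, gbar H ξ = (LinearMap.trace ℝ V (A ξ)) / (n : ℝ))
    (ht : V → V → W) (hht : ∀ X Y : V, ht X Y = h X Y - ⟪X, Y⟫ • H)
    (At : W → (V →ₗ[ℝ] V))
    (hAt : ∀ ξ : W, At ξ = A ξ - ((LinearMap.trace ℝ V (A ξ)) / (n : ℝ)) • (LinearMap.id : V →ₗ[ℝ] V))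
    (A0 : V →ₗ[ℝ] V) (hA0sa : ∀ X Y : V, ⟪A0 X, Y⟫ = ⟪X, A0 Y⟫)
    (hA0tr : LinearMap.trace ℝ V (A0 ∘ₗ A0) = (n : ℝ) ^ 2)
    (G : W) (hrep : ∀ X Y : V, ht X Y = ⟪A0 X, Y⟫ • G)
    (ξ₁ ξ₂ : W) (ε₁ ε₂ : ℝ)
    (hε₁ : ε₁ = 1 ∨ ε₁ = -1) (hε₂ : ε₂ = 1 ∨ ε₂ = -1)
    (hon₁ : gbar ξ₁ ξ₁ = ε₁) (hon₂ : gbar ξ₂ ξ₂ = ε₂) (hon₁₂ : gbar ξ₁ ξ₂ = 0)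
    :
    (ε₁ • (At ξ₁ ∘ₗ At ξ₁) + ε₂ • (At ξ₂ ∘ₗ At ξ₂)) = gbar G G • (A0 ∘ₗ A0) ∧
      LinearMap.trace ℝ V (ε₁ • (At ξ₁ ∘ₗ At ξ₁) + ε₂ • (At ξ₂ ∘ₗ At ξ₂)) = (n : ℝ) ^ 2 * gbar G G := by
  have hε₁sq : ε₁ * ε₁ = 1 := by rcases hε₁ with h' | h' <;> rw [h'] <;> ring
  have hε₂sq : ε₂ * ε₂ = 1 := by rcases hε₂ with h' | h' <;> rw [h'] <;> ring
  have hε₁0 : ε₁ ≠ 0 := by rcases hε₁ with h' | h' <;> rw [h'] <;> norm_num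
  have hε₂0 : ε₂ ≠ 0 := by rcases hε₂ with h' | h' <;> rw [h'] <;> norm_num
  -- key: At ξ = gbar G ξ • A0
  have key : ∀ ξ : W, At ξ = gbar G ξ • A0 := by
    intro ξ
    ext X
    apply ext_inner_right ℝ
    intro Y
    have h1 := hht X Y
    rw [hrep X Y] at h1
    have hh : h X Y = ⟪A0 X, Y⟫ • G + ⟪X, Y⟫ • H := (eq_sub_iff_add_eq.mp h1).symm
    have h2 : ⟪A ξ X, Y⟫ = ⟪A0 X, Y⟫ * gbar G ξ + ⟪X, Y⟫ * (LinearMap.trace ℝ V (A ξ) / (n : ℝ)) := by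
      rw [hAh, hh, ← hH]
      simp only [map_add, map_smul, LinearMap.add_apply, LinearMap.smul_apply, smul_eq_mul]
    rw [hAt]
    simp only [LinearMap.sub_apply, LinearMap.smul_apply, LinearMap.id_coe, id_eq,
      inner_sub_left, real_inner_smul_left, h2]
    ring
  have comp : ∀ ξ : W, At ξ ∘ₗ At ξ = (gbar G ξ * gbar G ξ) • (A0 ∘ₗ A0) := by
    intro ξ
    rw [key, LinearMap.smul_comp, LinearMap.comp_smul, smul_smul]
  set a := gbar G ξ₁ with ha
  set b := gbar G ξ₂ with hb
  have hli : LinearIndependent ℝ ![ξ₁, ξ₂] := by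
    rw [LinearIndependent.pair_iff]
    intro s t hst
    have h1 : gbar (s • ξ₁ + t • ξ₂) ξ₁ = 0 := by rw [hst]; simp
    have h2 : gbar (s • ξ₁ + t • ξ₂) ξ₂ = 0 := by rw [hst]; simp
    simp only [map_add, map_smul, LinearMap.add_apply, LinearMap.smul_apply, smul_eq_mul,
      hon₁, hon₂, hon₁₂, hgsymm ξ₂ ξ₁, mul_zero, add_zero, zero_add] at h1 h2
    constructor
    · rcases mul_eq_zero.1 h1 with h' | h'
      exacts [h', absurd h' hε₁0]
    · rcases mul_eq_zero.1 h2 with h' | h'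
      exacts [h', absurd h' hε₂0]
  have hspan : Submodule.span ℝ (Set.range ![ξ₁, ξ₂]) = ⊤ := by
    apply hli.span_eq_top_of_card_eq_finrank
    simp [hW]
  have hGeq : G = (ε₁ * a) • ξ₁ + (ε₂ * b) • ξ₂ := by
    have hD : G - ((ε₁ * a) • ξ₁ + (ε₂ * b) • ξ₂) = 0 := by
      apply hgnd
      intro η
      have hmem : η ∈ Submodule.span ℝ (Set.range ![ξ₁, ξ₂]) := by rw [hspan]; trivial
      have hrange : Set.range ![ξ₁, ξ₂] = {ξ₁, ξ₂} := by
        ext x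
        simp only [Set.mem_range, Set.mem_insert_iff, Set.mem_singleton_iff]
        constructor
        · rintro ⟨i, rfl⟩; fin_cases i <;> simp
        · rintro (rfl | rfl)
          exacts [⟨0, rfl⟩, ⟨1, rfl⟩]
      rw [hrange] at hmem
      induction hmem using Submodule.span_induction with
      | mem x hx =>
        rcases hx with h' | h'
        · rw [h']
          simp only [map_sub, map_add, map_smul, LinearMap.sub_apply, LinearMap.add_apply,
            LinearMap.smul_apply, smul_eq_mul, hon₁, hgsymm ξ₂ ξ₁, hon₁₂, ← ha]
          linear_combination (-a) * hε₁sq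
        · rw [h']
          simp only [map_sub, map_add, map_smul, LinearMap.sub_apply, LinearMap.add_apply,
            LinearMap.smul_apply, smul_eq_mul, hon₂, hon₁₂, ← hb]
          linear_combination (-b) * hε₂sq
      | zero => simp
      | add x y _ _ hx hy => rw [map_add, hx, hy, add_zero]
      | smul c x _ hx => rw [map_smul, hx, smul_zero]
    exact sub_eq_zero.1 hD
  have hGG : gbar G G = ε₁ * a * a + ε₂ * b * b := by
    nth_rewrite 2 [hGeq]
    simp only [map_add, map_smul, smul_eq_mul, ← ha, ← hb]
  have hfinal : (ε₁ • (At ξ₁ ∘ₗ At ξ₁) + ε₂ • (At ξ₂ ∘ₗ At ξ₂)) = gbar G G • (A0 ∘ₗ A0) := by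
    rw [comp ξ₁, comp ξ₂, ← ha, ← hb, hGG, smul_smul, smul_smul, ← add_smul]
    congr 1
    ring
  refine ⟨hfinal, ?_⟩
  rw [hfinal, LinearMap.map_smul, hA0tr]
  simp [mul_comm]
end
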